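/- arXiv:2404.01982 — 13 statements merged into one kernel-verified Lean document; each statement's English description precedes it below -/
import Mathlib

section
/- For bounded linear operators A and B on a complex Hilbert space, the operator norm of AB + BA (and of AB - BA) is at most ‖A‖·‖B‖ + (1/2)·‖A*B ± BA*‖; i.e., ‖AB ± BA‖ ≤ ‖A‖‖B‖ + (1/2)‖A*B ± BA*‖. -/
open ContinuousLinearMap

open scoped InnerProductSpace

section Aux

variable {H : Type*} [NormedAddCommGroup H] [InnerProductSpace ℂ H] [CompleteSpace H]

private lemma le_of_sq_le_sq' {x y : ℝ} (hx : 0 ≤ x) (hy : 0 ≤ y) (h : x ^ 2 ≤ y ^ 2) :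
    x ≤ y := by
  calc x = Real.sqrt (x ^ 2) := (Real.sqrt_sq hx).symm
    _ ≤ Real.sqrt (y ^ 2) := Real.sqrt_le_sqrt h
    _ = y := Real.sqrt_sq hy

private lemma scalar_ineq {a b t α β : ℝ} (ht : 0 ≤ t)
    (hα : 0 ≤ α) (hβ : 0 ≤ β) (hαa : α ≤ a) (hβb : β ≤ b) :
    (a * β) ^ 2 + (b * α) ^ 2 + 2 * (t * (α * β)) - 2 * (α ^ 2 * β ^ 2)
      + 2 * ((β * Real.sqrt (b ^ 2 - β ^ 2)) * (α * Real.sqrt (a ^ 2 - α ^ 2)))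
      ≤ (a * b + t / 2) ^ 2 := by
  have ha0 : 0 ≤ a := le_trans hα hαa
  have hb0 : 0 ≤ b := le_trans hβ hβb
  have hpa : (0:ℝ) ≤ a ^ 2 - α ^ 2 := by nlinarith
  have hqb : (0:ℝ) ≤ b ^ 2 - β ^ 2 := by nlinarith
  set p := Real.sqrt (a ^ 2 - α ^ 2) with hpdef
  set q := Real.sqrt (b ^ 2 - β ^ 2) with hqdef
  have hp0 : 0 ≤ p := Real.sqrt_nonneg _
  have hq0 : 0 ≤ q := Real.sqrt_nonneg _
  have hp2 : p ^ 2 = a ^ 2 - α ^ 2 := Real.sq_sqrt hpa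
  have hq2 : q ^ 2 = b ^ 2 - β ^ 2 := Real.sq_sqrt hqb
  have h1 : α * β + p * q ≤ a * b := by
    have h2 : (α * β + p * q) ^ 2 ≤ (a * b) ^ 2 := by nlinarith [sq_nonneg (α * q - β * p)]
    exact le_of_sq_le_sq' (by positivity) (by positivity) h2
  nlinarith [sq_nonneg (t / 2 - (α * β - p * q)), mul_nonneg ht (sub_nonneg.2 h1)]

private lemma defect_norm_sq (B : H →L[ℂ] H) (z : H) (hz : ‖z‖ = 1) :
    ‖adjoint B (B z) - ((‖B z‖ ^ 2 : ℝ) : ℂ) • z‖ ^ 2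
      ≤ ‖B z‖ ^ 2 * (‖B‖ ^ 2 - ‖B z‖ ^ 2) := by
  have hinner : (⟪adjoint B (B z), z⟫_ℂ) = ((‖B z‖ ^ 2 : ℝ) : ℂ) := by
    rw [ContinuousLinearMap.adjoint_inner_left, @inner_self_eq_norm_sq_to_K ℂ]
    norm_cast
  have hBv : ‖adjoint B (B z)‖ ≤ ‖B‖ * ‖B z‖ := by
    calc ‖adjoint B (B z)‖ ≤ ‖adjoint B‖ * ‖B z‖ := (adjoint B).le_opNorm (B z)
      _ = ‖B‖ * ‖B z‖ := by rw [ContinuousLinearMap.adjoint.norm_map B]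
  have hexp : ‖adjoint B (B z) - ((‖B z‖ ^ 2 : ℝ) : ℂ) • z‖ ^ 2
      = ‖adjoint B (B z)‖ ^ 2
        - 2 * RCLike.re (⟪adjoint B (B z), ((‖B z‖ ^ 2 : ℝ) : ℂ) • z⟫_ℂ)
        + ‖((‖B z‖ ^ 2 : ℝ) : ℂ) • z‖ ^ 2 := norm_sub_sq _ _
  have hre : RCLike.re (⟪adjoint B (B z), ((‖B z‖ ^ 2 : ℝ) : ℂ) • z⟫_ℂ)
      = ‖B z‖ ^ 2 * ‖B z‖ ^ 2 := by
    rw [inner_smul_right, hinner]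
    norm_cast
  have hsm : ‖((‖B z‖ ^ 2 : ℝ) : ℂ) • z‖ = ‖B z‖ ^ 2 := by
    rw [norm_smul, hz, mul_one, Complex.norm_real]
    exact abs_of_nonneg (by positivity)
  rw [hexp, hre, hsm]
  have h7 : ‖adjoint B (B z)‖ ^ 2 ≤ (‖B‖ * ‖B z‖) ^ 2 :=
    pow_le_pow_left₀ (norm_nonneg _) hBv 2
  nlinarith [h7]

set_option maxHeartbeats 1000000 in
private lemma pointwise (A B : H →L[ℂ] H) (ε : ℂ) (hε : ε = 1 ∨ ε = -1) (z : H)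
    (hz : ‖z‖ = 1) :
    ‖A (B z) + ε • B (A z)‖
      ≤ ‖A‖ * ‖B‖ + (1/2) * ‖adjoint A * B + ε • (B * adjoint A)‖ := by
  set T := adjoint A * B + ε • (B * adjoint A) with hTdef
  set u := A z with hu
  set v := B z with hv
  set w₁ := adjoint B v - ((‖v‖ ^ 2 : ℝ) : ℂ) • z with hw₁
  set w₂ := adjoint A u - ((‖u‖ ^ 2 : ℝ) : ℂ) • z with hw₂
  have hε2 : ε ^ 2 = 1 := by rcases hε with h | h <;> rw [h] <;> norm_num
  have hεnorm : ‖ε‖ = 1 := by rcases hε with h | h <;> rw [h] <;> norm_num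
  have hαa : ‖u‖ ≤ ‖A‖ := by
    calc ‖u‖ ≤ ‖A‖ * ‖z‖ := A.le_opNorm z
      _ = ‖A‖ := by rw [hz, mul_one]
  have hβb : ‖v‖ ≤ ‖B‖ := by
    calc ‖v‖ ≤ ‖B‖ * ‖z‖ := B.le_opNorm z
      _ = ‖B‖ := by rw [hz, mul_one]
  have hw1 : ‖w₁‖ ≤ ‖v‖ * Real.sqrt (‖B‖ ^ 2 - ‖v‖ ^ 2) := by
    have h1 := defect_norm_sq B z hz
    refine le_of_sq_le_sq' (norm_nonneg _) (by positivity) ?_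
    have hq2 : Real.sqrt (‖B‖ ^ 2 - ‖v‖ ^ 2) ^ 2 = ‖B‖ ^ 2 - ‖v‖ ^ 2 :=
      Real.sq_sqrt (by nlinarith [norm_nonneg v, norm_nonneg B])
    calc ‖w₁‖ ^ 2 ≤ ‖v‖ ^ 2 * (‖B‖ ^ 2 - ‖v‖ ^ 2) := h1
      _ = (‖v‖ * Real.sqrt (‖B‖ ^ 2 - ‖v‖ ^ 2)) ^ 2 := by rw [mul_pow, hq2]
  have hw2 : ‖w₂‖ ≤ ‖u‖ * Real.sqrt (‖A‖ ^ 2 - ‖u‖ ^ 2) := by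
    have h1 := defect_norm_sq A z hz
    refine le_of_sq_le_sq' (norm_nonneg _) (by positivity) ?_
    have hp2 : Real.sqrt (‖A‖ ^ 2 - ‖u‖ ^ 2) ^ 2 = ‖A‖ ^ 2 - ‖u‖ ^ 2 :=
      Real.sq_sqrt (by nlinarith [norm_nonneg u, norm_nonneg A])
    calc ‖w₂‖ ^ 2 ≤ ‖u‖ ^ 2 * (‖A‖ ^ 2 - ‖u‖ ^ 2) := h1
      _ = (‖u‖ * Real.sqrt (‖A‖ ^ 2 - ‖u‖ ^ 2)) ^ 2 := by rw [mul_pow, hp2]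
  have hTu : (⟪v, T u⟫_ℂ) = ⟪A v, B u⟫_ℂ + ε * ⟪adjoint B v, adjoint A u⟫_ℂ := by
    have hTapp : T u = adjoint A (B u) + ε • B (adjoint A u) := rfl
    rw [hTapp, inner_add_right, inner_smul_right,
      ContinuousLinearMap.adjoint_inner_right A v (B u),
      ← ContinuousLinearMap.adjoint_inner_left B (adjoint A u) v]
  have hWW : (⟪adjoint B v, adjoint A u⟫_ℂ)
      = ((‖u‖ ^ 2 * ‖v‖ ^ 2 : ℝ) : ℂ) + ⟪w₁, w₂⟫_ℂ := by
    have h1 : (⟪adjoint B v, z⟫_ℂ) = ((‖v‖ ^ 2 : ℝ) : ℂ) := by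
      rw [ContinuousLinearMap.adjoint_inner_left, ← hv, @inner_self_eq_norm_sq_to_K ℂ]
      norm_cast
    have h2 : (⟪z, adjoint A u⟫_ℂ) = ((‖u‖ ^ 2 : ℝ) : ℂ) := by
      rw [ContinuousLinearMap.adjoint_inner_right, ← hu, @inner_self_eq_norm_sq_to_K ℂ]
      norm_cast
    have h3 : (⟪z, z⟫_ℂ) = 1 := by
      rw [@inner_self_eq_norm_sq_to_K ℂ, hz]; norm_num
    rw [hw₁, hw₂, inner_sub_left, inner_sub_right, inner_sub_right, inner_smul_left,
      inner_smul_right, inner_smul_left, inner_smul_right, h1, h2, h3]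
    simp only [Complex.conj_ofReal, mul_one]
    push_cast
    ring
  have hsq : ‖A v + ε • B u‖ ^ 2
      = ‖A v‖ ^ 2 + 2 * RCLike.re (⟪A v, ε • B u⟫_ℂ) + ‖ε • B u‖ ^ 2 :=
    norm_add_sq _ _
  have hsm : ‖ε • B u‖ = ‖B u‖ := by rw [norm_smul, hεnorm, one_mul]
  have hre : RCLike.re (⟪A v, ε • B u⟫_ℂ)
      = RCLike.re (ε * ⟪v, T u⟫_ℂ) - ‖u‖ ^ 2 * ‖v‖ ^ 2 - RCLike.re (⟪w₁, w₂⟫_ℂ) := by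
    have e1 : (⟪A v, ε • B u⟫_ℂ) = ε * ⟪A v, B u⟫_ℂ := inner_smul_right _ _ _
    have e3 : ε * ⟪A v, B u⟫_ℂ
        = ε * ⟪v, T u⟫_ℂ - ((‖u‖ ^ 2 * ‖v‖ ^ 2 : ℝ) : ℂ) - ⟪w₁, w₂⟫_ℂ := by
      rw [hTu, hWW]
      linear_combination (-((‖u‖ ^ 2 * ‖v‖ ^ 2 : ℝ) : ℂ) - ⟪w₁, w₂⟫_ℂ) * hε2
    rw [e1, e3, map_sub, map_sub]
    norm_cast
  have hb1 : RCLike.re (ε * ⟪v, T u⟫_ℂ) ≤ ‖v‖ * (‖T‖ * ‖u‖) := by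
    have h4 : ‖ε * ⟪v, T u⟫_ℂ‖ ≤ ‖v‖ * (‖T‖ * ‖u‖) := by
      rw [norm_mul, hεnorm, one_mul]
      calc ‖⟪v, T u⟫_ℂ‖ ≤ ‖v‖ * ‖T u‖ := norm_inner_le_norm _ _
        _ ≤ ‖v‖ * (‖T‖ * ‖u‖) :=
            mul_le_mul_of_nonneg_left (T.le_opNorm u) (norm_nonneg _)
    exact le_trans (le_trans (le_abs_self _) (RCLike.abs_re_le_norm _)) h4
  have hb2 : -((‖v‖ * Real.sqrt (‖B‖ ^ 2 - ‖v‖ ^ 2)) * (‖u‖ * Real.sqrt (‖A‖ ^ 2 - ‖u‖ ^ 2)))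
      ≤ RCLike.re (⟪w₁, w₂⟫_ℂ) := by
    have h5 : ‖⟪w₁, w₂⟫_ℂ‖
        ≤ (‖v‖ * Real.sqrt (‖B‖ ^ 2 - ‖v‖ ^ 2)) * (‖u‖ * Real.sqrt (‖A‖ ^ 2 - ‖u‖ ^ 2)) := by
      refine le_trans (norm_inner_le_norm _ _) ?_
      exact mul_le_mul hw1 hw2 (norm_nonneg _) (by positivity)
    have h6 := le_trans (RCLike.abs_re_le_norm (⟪w₁, w₂⟫_ℂ)) h5
    linarith [neg_abs_le (RCLike.re (⟪w₁, w₂⟫_ℂ))]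
  have hAv : ‖A v‖ ≤ ‖A‖ * ‖v‖ := A.le_opNorm v
  have hBu : ‖B u‖ ≤ ‖B‖ * ‖u‖ := B.le_opNorm u
  have hs1 : ‖A v‖ ^ 2 ≤ (‖A‖ * ‖v‖) ^ 2 := pow_le_pow_left₀ (norm_nonneg _) hAv 2
  have hs2 : ‖B u‖ ^ 2 ≤ (‖B‖ * ‖u‖) ^ 2 := pow_le_pow_left₀ (norm_nonneg _) hBu 2
  have hscal := scalar_ineq (a := ‖A‖) (b := ‖B‖) (t := ‖T‖)
    (norm_nonneg T) (norm_nonneg u) (norm_nonneg v) hαa hβb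
  have hmain : ‖A v + ε • B u‖ ^ 2 ≤ (‖A‖ * ‖B‖ + ‖T‖ / 2) ^ 2 := by
    rw [hsq, hsm, hre]
    nlinarith [hb1, hb2, hs1, hs2, hscal]
  have hfin : ‖A v + ε • B u‖ ≤ ‖A‖ * ‖B‖ + ‖T‖ / 2 := by
    refine le_of_sq_le_sq' (norm_nonneg _) ?_ hmain
    have := norm_nonneg A
    have := norm_nonneg B
    have := norm_nonneg T
    positivity
  calc ‖A (B z) + ε • B (A z)‖ = ‖A v + ε • B u‖ := rfl
    _ ≤ ‖A‖ * ‖B‖ + ‖T‖ / 2 := hfin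
    _ = ‖A‖ * ‖B‖ + (1/2) * ‖T‖ := by ring

private lemma opnorm_bound (A B : H →L[ℂ] H) (ε : ℂ) (hε : ε = 1 ∨ ε = -1) :
    ‖A * B + ε • (B * A)‖ ≤ ‖A‖ * ‖B‖ + (1/2) * ‖adjoint A * B + ε • (B * adjoint A)‖ := by
  have hC : 0 ≤ ‖A‖ * ‖B‖ + (1/2) * ‖adjoint A * B + ε • (B * adjoint A)‖ := by
    have h1 := norm_nonneg (adjoint A * B + ε • (B * adjoint A))
    have h2 := norm_nonneg A
    have h3 := norm_nonneg B
    positivity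
  refine opNorm_le_bound _ hC fun x => ?_
  rcases eq_or_ne x 0 with rfl | hx
  · simp
  · have hnx : (0:ℝ) < ‖x‖ := norm_pos_iff.2 hx
    have hcx : ((‖x‖ : ℝ) : ℂ) ≠ 0 := by
      simp only [ne_eq, Complex.ofReal_eq_zero]
      exact hnx.ne'
    set z : H := (((‖x‖ : ℝ) : ℂ))⁻¹ • x with hzdef
    have hzn : ‖z‖ = 1 := by
      rw [hzdef, norm_smul, norm_inv, Complex.norm_real, norm_norm,
        inv_mul_cancel₀ hnx.ne']
    have hxz : x = ((‖x‖ : ℝ) : ℂ) • z := by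
      rw [hzdef, smul_smul, mul_inv_cancel₀ hcx, one_smul]
    have happ : (A * B + ε • (B * A)) x = ((‖x‖ : ℝ) : ℂ) • (A (B z) + ε • B (A z)) := by
      conv_lhs => rw [hxz]
      simp only [ContinuousLinearMap.add_apply, ContinuousLinearMap.smul_apply,
        ContinuousLinearMap.mul_apply, map_smul, smul_add]
    rw [happ, norm_smul, Complex.norm_real, norm_norm]
    have hpt := pointwise A B ε hε z hzn
    calc ‖x‖ * ‖A (B z) + ε • B (A z)‖
        ≤ ‖x‖ * (‖A‖ * ‖B‖ + (1/2) * ‖adjoint A * B + ε • (B * adjoint A)‖) :=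
          mul_le_mul_of_nonneg_left hpt hnx.le
      _ = (‖A‖ * ‖B‖ + (1/2) * ‖adjoint A * B + ε • (B * adjoint A)‖) * ‖x‖ := by ring

end Aux

theorem stmt0 {H : Type*} [NormedAddCommGroup H] [InnerProductSpace ℂ H] [CompleteSpace H]
    (A B : H →L[ℂ] H) :
    ‖A * B + B * A‖ ≤ ‖A‖ * ‖B‖ + (1/2) * ‖adjoint A * B + B * adjoint A‖ ∧
    ‖A * B - B * A‖ ≤ ‖A‖ * ‖B‖ + (1/2) * ‖adjoint A * B - B * adjoint A‖ := by
  constructor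
  · have h := opnorm_bound A B 1 (Or.inl rfl)
    simpa only [one_smul] using h
  · have h := opnorm_bound A B (-1) (Or.inr rfl)
    simpa only [neg_smul, one_smul, ← sub_eq_add_neg] using h
end

section
/- For a bounded linear operator A on a complex Hilbert space, 2‖A²‖ ≤ ‖A*A + AA*‖ ≤ ‖A²‖ + ‖A‖². -/
/-!
Put `S = |A|` and `T = |A*|`. Then `A*A + AA* = S² + T²`, `‖S‖ = ‖T‖ = ‖A‖` and `‖ST‖ = ‖A²‖`.
With `N = ‖S² + T²‖`, the row operator `(u, v) ↦ Su + Tv` has norm `√N`, i.e.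
`‖Su + Tv‖² ≤ N (‖u‖² + ‖v‖²)`. For unit vectors `u, v` this gives
`4 Re⟪Su, Tv⟫ ≤ ‖Su + Tv‖² ≤ 2N`, whence `2‖ST‖ ≤ N`. Conversely, expanding the square gives
`‖Su + Tv‖² ≤ (‖ST‖ + ‖A‖²)(‖u‖² + ‖v‖²)`, and taking `u = Sx`, `v = Tx` yields
`N² ≤ (‖ST‖ + ‖A‖²) N`.
-/

open ContinuousLinearMap

namespace CFC

variable {A : Type*} [NonUnitalNormedRing A] [StarRing A] [CStarRing A]
  [NormedSpace ℝ A] [SMulCommClass ℝ A A] [IsScalarTower ℝ A A]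
  [NonUnitalContinuousFunctionalCalculus ℝ A IsSelfAdjoint]
  [PartialOrder A] [StarOrderedRing A] [NonnegSpectrumClass ℝ A]

lemma norm_abs_mul (a b : A) : ‖abs a * b‖ = ‖a * b‖ := by
  have h : star (abs a * b) * (abs a * b) = star (a * b) * (a * b) := by
    rw [star_mul, star_mul, (abs_nonneg a).star_eq, mul_assoc, ← mul_assoc (abs a), abs_mul_abs]
    simp only [mul_assoc]
  rw [← sq_eq_sq₀ (norm_nonneg _) (norm_nonneg _), sq, sq, ← CStarRing.norm_star_mul_self, h,
    CStarRing.norm_star_mul_self]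

lemma norm_abs_mul_abs_star (a : A) : ‖abs a * abs (star a)‖ = ‖a * a‖ := by
  rw [norm_abs_mul, ← norm_star, star_mul, (abs_nonneg _).star_eq, norm_abs_mul, ← star_mul,
    norm_star]

end CFC

lemma le_of_sq_le_mul {a c : ℝ} (hc : 0 ≤ c) (h : a ^ 2 ≤ c * a) : a ≤ c := by
  nlinarith

namespace ContinuousLinearMap

lemma opNorm_sq_le_of_norm_apply_sq_le {𝕜 E F : Type*} [NontriviallyNormedField 𝕜]
    [SeminormedAddCommGroup E] [SeminormedAddCommGroup F] [NormedSpace 𝕜 E] [NormedSpace 𝕜 F]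
    {B : E →L[𝕜] F} {c : ℝ} (hc : 0 ≤ c) (h : ∀ x, ‖B x‖ ^ 2 ≤ c * ‖x‖ ^ 2) : ‖B‖ ^ 2 ≤ c := by
  have hB : ‖B‖ ≤ √c := opNorm_le_bound B (Real.sqrt_nonneg c) fun x ↦ by
    rw [← Real.sqrt_sq (norm_nonneg (B x)), ← Real.sqrt_sq (norm_nonneg x), ← Real.sqrt_mul hc]
    exact Real.sqrt_le_sqrt (h x)
  exact (pow_le_pow_left₀ (norm_nonneg B) hB 2).trans_eq (Real.sq_sqrt hc)

variable {𝕜 E : Type*} [RCLike 𝕜] [NormedAddCommGroup E] [InnerProductSpace 𝕜 E] [CompleteSpace E]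
  {S T : E →L[𝕜] E}

lemma norm_apply_sq_add_norm_apply_sq_le (hS : IsSelfAdjoint S) (hT : IsSelfAdjoint T) (x : E) :
    ‖S x‖ ^ 2 + ‖T x‖ ^ 2 ≤ ‖S * S + T * T‖ * ‖x‖ ^ 2 := by
  have h : ‖S x‖ ^ 2 + ‖T x‖ ^ 2 = RCLike.re (inner 𝕜 ((S * S + T * T) x) x) := by
    rw [apply_norm_sq_eq_inner_adjoint_left, apply_norm_sq_eq_inner_adjoint_left, hS.adjoint_eq,
      hT.adjoint_eq, add_apply, inner_add_left, map_add]
    rfl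
  calc ‖S x‖ ^ 2 + ‖T x‖ ^ 2 ≤ ‖(S * S + T * T) x‖ * ‖x‖ := h ▸ re_inner_le_norm _ _
    _ ≤ ‖S * S + T * T‖ * ‖x‖ * ‖x‖ := by gcongr; exact le_opNorm _ _
    _ = ‖S * S + T * T‖ * ‖x‖ ^ 2 := by ring

lemma norm_apply_add_apply_sq_le (hS : IsSelfAdjoint S) (hT : IsSelfAdjoint T) (u v : E) :
    ‖S u + T v‖ ^ 2 ≤ ‖S * S + T * T‖ * (‖u‖ ^ 2 + ‖v‖ ^ 2) := by
  set w := S u + T v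
  have hw : ‖w‖ ^ 2 ≤ ‖u‖ * ‖S w‖ + ‖v‖ * ‖T w‖ := by
    calc ‖w‖ ^ 2 = RCLike.re (inner 𝕜 (S u) w) + RCLike.re (inner 𝕜 (T v) w) := by
          rw [← inner_self_eq_norm_sq (𝕜 := 𝕜), ← map_add, ← inner_add_left]
      _ = RCLike.re (inner 𝕜 u (S w)) + RCLike.re (inner 𝕜 v (T w)) := by
          rw [← adjoint_inner_right S, ← adjoint_inner_right T, hS.adjoint_eq, hT.adjoint_eq]
      _ ≤ ‖u‖ * ‖S w‖ + ‖v‖ * ‖T w‖ := add_le_add (re_inner_le_norm _ _) (re_inner_le_norm _ _)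
  have hCS : (‖u‖ * ‖S w‖ + ‖v‖ * ‖T w‖) ^ 2 ≤ (‖u‖ ^ 2 + ‖v‖ ^ 2) * (‖S w‖ ^ 2 + ‖T w‖ ^ 2) := by
    nlinarith [sq_nonneg (‖u‖ * ‖T w‖ - ‖v‖ * ‖S w‖)]
  refine le_of_sq_le_mul (by positivity) ?_
  calc (‖w‖ ^ 2) ^ 2 ≤ (‖u‖ ^ 2 + ‖v‖ ^ 2) * (‖S w‖ ^ 2 + ‖T w‖ ^ 2) :=
        (pow_le_pow_left₀ (by positivity) hw 2).trans hCS
    _ ≤ (‖u‖ ^ 2 + ‖v‖ ^ 2) * (‖S * S + T * T‖ * ‖w‖ ^ 2) := by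
        gcongr; exact norm_apply_sq_add_norm_apply_sq_le hS hT w
    _ = ‖S * S + T * T‖ * (‖u‖ ^ 2 + ‖v‖ ^ 2) * ‖w‖ ^ 2 := by ring

lemma two_mul_norm_mul_le_norm_mul_self_add_mul_self (hS : IsSelfAdjoint S)
    (hT : IsSelfAdjoint T) : 2 * ‖S * T‖ ≤ ‖S * S + T * T‖ := by
  suffices ‖S * T‖ ≤ ‖S * S + T * T‖ / 2 by linarith
  refine opNorm_le_of_unit_norm (by positivity) fun v hv ↦ ?_
  set w := (S * T) v
  rcases eq_or_ne w 0 with hw | hw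
  · rw [hw, norm_zero]; positivity
  set u := ((‖w‖ : 𝕜)⁻¹) • w
  have hu : ‖u‖ = 1 := norm_smul_inv_norm hw
  have huw : RCLike.re (inner 𝕜 (S u) (T v)) = ‖w‖ := by
    rw [← adjoint_inner_right, hS.adjoint_eq]
    change RCLike.re (inner 𝕜 u w) = ‖w‖
    rw [inner_smul_left, inner_self_eq_norm_sq_to_K, ← RCLike.ofReal_inv, RCLike.conj_ofReal,
      ← RCLike.ofReal_pow, ← RCLike.ofReal_mul, RCLike.ofReal_re]
    field_simp [norm_ne_zero_iff.mpr hw]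
  have h4 : 4 * ‖w‖ ≤ ‖S u + T v‖ ^ 2 := by
    rw [norm_add_sq (𝕜 := 𝕜), ← huw]
    nlinarith [re_inner_le_norm (𝕜 := 𝕜) (S u) (T v), sq_nonneg (‖S u‖ - ‖T v‖)]
  have := norm_apply_add_apply_sq_le hS hT u v
  rw [hu, hv] at this
  linarith

lemma norm_apply_add_apply_sq_le_of_norm_mul (hS : IsSelfAdjoint S) (u v : E) :
    ‖S u + T v‖ ^ 2 ≤ (‖S * T‖ + max ‖S‖ ‖T‖ ^ 2) * (‖u‖ ^ 2 + ‖v‖ ^ 2) := by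
  have hcross : RCLike.re (inner 𝕜 (S u) (T v)) ≤ ‖S * T‖ * (‖u‖ * ‖v‖) := by
    rw [← adjoint_inner_right, hS.adjoint_eq]
    calc RCLike.re (inner 𝕜 u ((S * T) v)) ≤ ‖u‖ * ‖(S * T) v‖ := re_inner_le_norm _ _
      _ ≤ ‖u‖ * (‖S * T‖ * ‖v‖) := by gcongr; exact le_opNorm _ _
      _ = ‖S * T‖ * (‖u‖ * ‖v‖) := by ring
  have hSu : ‖S u‖ ≤ max ‖S‖ ‖T‖ * ‖u‖ := (le_opNorm S u).trans (by gcongr; exact le_max_left _ _)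
  have hTv : ‖T v‖ ≤ max ‖S‖ ‖T‖ * ‖v‖ := (le_opNorm T v).trans (by gcongr; exact le_max_right _ _)
  rw [norm_add_sq (𝕜 := 𝕜)]
  nlinarith [sq_nonneg (‖u‖ - ‖v‖), norm_nonneg (S * T), pow_le_pow_left₀ (norm_nonneg _) hSu 2,
    pow_le_pow_left₀ (norm_nonneg _) hTv 2]

lemma norm_mul_self_add_mul_self_le (hS : IsSelfAdjoint S) (hT : IsSelfAdjoint T) :
    ‖S * S + T * T‖ ≤ ‖S * T‖ + max ‖S‖ ‖T‖ ^ 2 := by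
  set N := ‖S * S + T * T‖
  set K := ‖S * T‖ + max ‖S‖ ‖T‖ ^ 2
  refine le_of_sq_le_mul (by positivity) (opNorm_sq_le_of_norm_apply_sq_le (by positivity)
    fun x ↦ ?_)
  calc ‖(S * S + T * T) x‖ ^ 2 = ‖S (S x) + T (T x)‖ ^ 2 := rfl
    _ ≤ K * (‖S x‖ ^ 2 + ‖T x‖ ^ 2) := norm_apply_add_apply_sq_le_of_norm_mul hS _ _
    _ ≤ K * (N * ‖x‖ ^ 2) := by gcongr; exact norm_apply_sq_add_norm_apply_sq_le hS hT x
    _ = K * N * ‖x‖ ^ 2 := by ring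

end ContinuousLinearMap

theorem stmt1 {H : Type*} [NormedAddCommGroup H] [InnerProductSpace ℂ H] [CompleteSpace H]
    (A : H →L[ℂ] H) :
    2 * ‖A * A‖ ≤ ‖adjoint A * A + A * adjoint A‖ ∧
    ‖adjoint A * A + A * adjoint A‖ ≤ ‖A * A‖ + ‖A‖ ^ 2 := by
  have hS : IsSelfAdjoint (CFC.abs A) := (CFC.abs_nonneg A).isSelfAdjoint
  have hT : IsSelfAdjoint (CFC.abs (star A)) := (CFC.abs_nonneg _).isSelfAdjoint
  have hsum : CFC.abs A * CFC.abs A + CFC.abs (star A) * CFC.abs (star A) =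
      adjoint A * A + A * adjoint A := by
    rw [CFC.abs_mul_abs, CFC.abs_mul_abs, star_star, star_eq_adjoint]
  have hprod := CFC.norm_abs_mul_abs_star A
  constructor
  · simpa only [hsum, hprod] using two_mul_norm_mul_le_norm_mul_self_add_mul_self hS hT
  · simpa only [hsum, hprod, CFC.norm_abs, norm_star, max_self] using
      norm_mul_self_add_mul_self_le hS hT
end

section
/- For a bounded linear operator A on a complex Hilbert space, ‖A*A − AA*‖ ≤ ‖A‖². -/
/-!
In a C⋆-algebra, `a⋆a` and `aa⋆` are positive of norm `‖a‖²`, so both lie in the order interval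
`[0, ‖a‖²]` and their difference lies in `[-‖a‖², ‖a‖²]`. For a self-adjoint element such an order
bound is a norm bound, because `‖b‖` or `-‖b‖` belongs to the spectrum of `b`.
-/

open ContinuousLinearMap

namespace CStarAlgebra

variable {A : Type*} [CStarAlgebra A] [PartialOrder A] [StarOrderedRing A]

lemma norm_le_of_mem_Icc_algebraMap {a : A} {r : ℝ} (hr : 0 ≤ r)
    (h : a ∈ Set.Icc (algebraMap ℝ A (-r)) (algebraMap ℝ A r)) : ‖a‖ ≤ r := by
  obtain _ | _ := subsingleton_or_nontrivial A
  · simpa [Subsingleton.elim a 0] using hr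
  have ha : IsSelfAdjoint a := .of_ge h.1 (.algebraMap A (.all _))
  have h_lower := (algebraMap_le_iff_le_spectrum ha).mp h.1
  have h_upper := (le_algebraMap_iff_spectrum_le ha).mp h.2
  rcases norm_or_neg_norm_mem_spectrum ha with h | h
  · exact h_upper _ h
  · linarith [h_lower _ h]

lemma norm_sub_le_max_of_nonneg {a b : A} (ha : 0 ≤ a) (hb : 0 ≤ b) :
    ‖a - b‖ ≤ max ‖a‖ ‖b‖ := by
  refine norm_le_of_mem_Icc_algebraMap (by positivity) ⟨?_, ?_⟩
  · calc algebraMap ℝ A (-max ‖a‖ ‖b‖) ≤ -algebraMap ℝ A ‖b‖ := by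
          rw [map_neg, neg_le_neg_iff]; gcongr; exact le_max_right _ _
      _ ≤ -b := neg_le_neg (IsSelfAdjoint.of_nonneg hb).le_algebraMap_norm_self
      _ ≤ a - b := by simpa using ha
  · calc a - b ≤ a := sub_le_self a hb
      _ ≤ algebraMap ℝ A ‖a‖ := (IsSelfAdjoint.of_nonneg ha).le_algebraMap_norm_self
      _ ≤ algebraMap ℝ A (max ‖a‖ ‖b‖) := by gcongr; exact le_max_left _ _

lemma norm_star_mul_self_sub_mul_star_le (a : A) : ‖star a * a - a * star a‖ ≤ ‖a‖ ^ 2 := by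
  calc ‖star a * a - a * star a‖ ≤ max ‖star a * a‖ ‖a * star a‖ :=
        norm_sub_le_max_of_nonneg (star_mul_self_nonneg a) (mul_star_self_nonneg a)
    _ = ‖a‖ ^ 2 := by rw [CStarRing.norm_star_mul_self, CStarRing.norm_self_mul_star, max_self, sq]

end CStarAlgebra

theorem stmt2 {H : Type*} [NormedAddCommGroup H] [InnerProductSpace ℂ H] [CompleteSpace H]
    (A : H →L[ℂ] H) :
    ‖adjoint A * A - A * adjoint A‖ ≤ ‖A‖ ^ 2 := by
  simpa only [star_eq_adjoint] using CStarAlgebra.norm_star_mul_self_sub_mul_star_le A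
end

section
/- Let A be an n×n complex matrix and p ≥ 2. Then the Schatten (p/2)-quasinorm of A² satisfies ‖A²‖_{p/2}^{p/2} ≤ ‖A‖_p^p. -/
/-!
Horn's inequality `∏_{i<k} sᵢ(AB) ≤ ∏_{i<k} sᵢ(A) · ∏_{i<k} sᵢ(B)` for the decreasing
singular values, applied with `B = A`, says that `sᵢ(A²)` is weakly log-majorized by `sᵢ(A)²`.
Horn's inequality itself comes from Cauchy–Binet: in an eigenbasis of a Hermitian `H`,
`det (Jᴴ H J)` is a sum of `k`-minors `|det|²` weighted by `k`-fold products of eigenvalues of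
`H`, so it is at most the largest such product times `det (Jᴴ J)`; apply this with `J = BQ`,
`H = AᴴA` and then with `J = Q`, `H = BᴴB`, where the columns of `Q` are top eigenvectors of
`(AB)ᴴ(AB)`. Weak log-majorization of a decreasing sequence implies weak majorization
(Abel summation and `log t ≤ t - 1`), also after raising both sequences to the power `p / 4`.
-/

open Matrix

/-- Singular values of a complex square matrix: the square roots of the
eigenvalues of `Aᴴ * A` (i.e. the eigenvalues of `|A| = (Aᴴ A)^(1/2)`). -/
noncomputable def singVal {n : ℕ} (A : Matrix (Fin n) (Fin n) ℂ) : Fin n → ℝ :=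
  fun i => Real.sqrt ((Matrix.isHermitian_conjTranspose_mul_self A).eigenvalues i)

/-- `trace |A|^p = ∑ sᵢ(A)^p`. -/
noncomputable def traceAbsPow {n : ℕ} (A : Matrix (Fin n) (Fin n) ℂ) (p : ℝ) : ℝ :=
  ∑ i, singVal A i ^ p

/-- The Schatten `p`-norm `‖A‖_p = (trace |A|^p)^(1/p)`. -/
noncomputable def schattenNorm {n : ℕ} (A : Matrix (Fin n) (Fin n) ℂ) (p : ℝ) : ℝ :=
  traceAbsPow A p ^ (1 / p)

open Finset Function Equiv

open scoped Classical in
noncomputable def strictMonoTuples (k : ℕ) (m : Type*) [Fintype m] [LinearOrder m] :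
    Finset (Fin k → m) :=
  {g | StrictMono g}

section CauchyBinet

variable {R m : Type*} [CommRing R] {k : ℕ}

theorem sum_perm_sign_mul_prod (M : Matrix (Fin k) m R) (N : Matrix m (Fin k) R)
    (f : Fin k → m) :
    ∑ σ : Perm (Fin k), (Perm.sign σ : R) * ∏ i, M (σ i) (f i) * N (f i) i
      = (∏ i, N (f i) i) * det (M.submatrix id f) := by
  simp only [det_apply', mul_sum, prod_mul_distrib, submatrix_apply, id]
  exact sum_congr rfl fun σ _ => by ring

theorem det_submatrix_eq_zero_of_not_injective (M : Matrix (Fin k) m R) {f : Fin k → m}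
    (hf : ¬ Injective f) : det (M.submatrix id f) = 0 := by
  obtain ⟨i, j, hij, hne⟩ : ∃ i j, f i = f j ∧ i ≠ j := by
    simpa [Injective] using hf
  exact det_zero_of_column_eq hne fun l => by simp [hij]

theorem sum_perm_prod_mul_det_submatrix_comp (M : Matrix (Fin k) m R) (N : Matrix m (Fin k) R)
    (g : Fin k → m) :
    ∑ σ : Perm (Fin k), (∏ i, N (g (σ i)) i) * det (M.submatrix id (g ∘ σ))
      = det (M.submatrix id g) * det (N.submatrix g id) := by
  have h (σ : Perm (Fin k)) : M.submatrix id (g ∘ σ) = (M.submatrix id g).submatrix id σ := rfl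
  simp only [h, det_permute', det_apply' (N.submatrix g id), mul_sum, submatrix_apply, id]
  exact sum_congr rfl fun σ _ => by ring

variable [LinearOrder m]

theorem strictMono_comp_sort_of_injective {f : Fin k → m} (hf : Injective f) :
    StrictMono (f ∘ Tuple.sort f) :=
  (Tuple.monotone_sort f).strictMono_of_injective (hf.comp (Tuple.sort f).injective)

theorem eq_of_strictMono_comp_perm_eq {g₁ g₂ : Fin k → m} {σ₁ σ₂ : Perm (Fin k)}
    (hg₁ : StrictMono g₁) (hg₂ : StrictMono g₂) (h : g₁ ∘ σ₁ = g₂ ∘ σ₂) :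
    g₁ = g₂ ∧ σ₁ = σ₂ := by
  have hg : g₁ = g₂ :=
    (hg₁.range_inj hg₂).mp (by rw [← EquivLike.range_comp g₁ σ₁, h, EquivLike.range_comp])
  subst hg
  exact ⟨rfl, Equiv.ext fun i => hg₁.injective (congrFun h i)⟩

theorem mem_strictMonoTuples [Fintype m] {g : Fin k → m} :
    g ∈ strictMonoTuples k m ↔ StrictMono g := by
  simp [strictMonoTuples]

variable [Fintype m]

theorem det_mul_eq_sum_det_submatrix (M : Matrix (Fin k) m R) (N : Matrix m (Fin k) R) :
    det (M * N) =
      ∑ g ∈ strictMonoTuples k m, det (M.submatrix id g) * det (N.submatrix g id) := by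
  classical
  calc det (M * N)
      = ∑ f : Fin k → m, ∑ σ : Perm (Fin k),
          (Perm.sign σ : R) * ∏ i, M (σ i) (f i) * N (f i) i := by
        simp only [det_apply', mul_apply, prod_univ_sum, mul_sum, Fintype.piFinset_univ]
        rw [sum_comm]
    _ = ∑ f : Fin k → m with Injective f, (∏ i, N (f i) i) * det (M.submatrix id f) := by
        simp only [sum_perm_sign_mul_prod]
        refine (sum_subset (filter_subset _ _) fun f _ hf => ?_).symm
        rw [det_submatrix_eq_zero_of_not_injective M (by simpa using hf), mul_zero]
    _ = ∑ g ∈ strictMonoTuples k m, ∑ σ : Perm (Fin k),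
          (∏ i, N (g (σ i)) i) * det (M.submatrix id (g ∘ σ)) := by
        rw [← sum_product']
        refine (sum_bij (fun p _ => p.1 ∘ p.2) ?_ ?_ ?_ fun _ _ => rfl).symm
        · rintro ⟨g, σ⟩ hg
          exact (mem_filter_univ _).mpr
            ((mem_strictMonoTuples.mp (mem_product.mp hg).1).injective.comp σ.injective)
        · rintro ⟨g₁, σ₁⟩ hg₁ ⟨g₂, σ₂⟩ hg₂ h
          obtain ⟨rfl, rfl⟩ := eq_of_strictMono_comp_perm_eq
            (mem_strictMonoTuples.mp (mem_product.mp hg₁).1)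
            (mem_strictMonoTuples.mp (mem_product.mp hg₂).1) h
          rfl
        · intro f hf
          have hg := strictMono_comp_sort_of_injective ((mem_filter_univ _).mp hf)
          refine ⟨(f ∘ Tuple.sort f, (Tuple.sort f).symm),
            mem_product.mpr ⟨mem_strictMonoTuples.mpr hg, mem_univ _⟩, ?_⟩
          ext i
          simp
    _ = _ := sum_congr rfl fun g _ => sum_perm_prod_mul_det_submatrix_comp M N g

theorem det_conjTranspose_mul_diagonal_mul [StarRing R] (W : Matrix m (Fin k) R) (w : m → R) :
    det (Wᴴ * diagonal w * W) = ∑ g ∈ strictMonoTuples k m,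
      (∏ i, w (g i)) * (star (det (W.submatrix g id)) * det (W.submatrix g id)) := by
  rw [det_mul_eq_sum_det_submatrix]
  refine sum_congr rfl fun g _ => ?_
  have h : (Wᴴ * diagonal w).submatrix id g = (W.submatrix g id)ᴴ * diagonal (w ∘ g) := by
    ext i j
    simp [mul_diagonal]
  rw [h, det_mul, det_diagonal, det_conjTranspose]
  simp only [Function.comp_apply]
  ring

end CauchyBinet

theorem Finset.prod_le_prod_range_card_of_antitone {R : Type*} [CommSemiring R] [PartialOrder R]
    [IsOrderedRing R] {s : ℕ → R} (hs : Antitone s) (h0 : ∀ i, 0 ≤ s i) (t : Finset ℕ) :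
    ∏ i ∈ t, s i ≤ ∏ i ∈ range t.card, s i := by
  induction t using Finset.induction_on_max with
  | empty => simp
  | insert a t ha ih =>
    have hat : a ∉ t := fun h => (ha a h).false
    have hcard : t.card ≤ a := by
      simpa using card_le_card fun x hx => mem_range.2 (ha x hx)
    rw [prod_insert hat, card_insert_of_notMem hat, prod_range_succ, mul_comm]
    exact mul_le_mul ih (hs hcard) (h0 a) (prod_nonneg fun i _ => h0 i)

namespace Matrix.IsHermitian

variable {𝕜 m : Type*} [RCLike 𝕜] [Fintype m] [DecidableEq m] {H : Matrix m m 𝕜}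
  (hH : H.IsHermitian)

-- `eigenvalues₀` lists the eigenvalues in decreasing order; the zero padding makes the
-- prefix products `∏ i ∈ range k` meaningful for every `k`.
noncomputable def sortedEigenvalues (i : ℕ) : ℝ :=
  if h : i < Fintype.card m then hH.eigenvalues₀ ⟨i, h⟩ else 0

theorem eigenvalues_eq_sortedEigenvalues (j : m) :
    hH.eigenvalues j =
      hH.sortedEigenvalues ((Fintype.equivOfCardEq (Fintype.card_fin _)).symm j) := by
  simp [sortedEigenvalues, eigenvalues]

theorem sum_comp_eigenvalues (F : ℝ → ℝ) :
    ∑ j, F (hH.eigenvalues j) = ∑ i ∈ range (Fintype.card m), F (hH.sortedEigenvalues i) := by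
  simp only [eigenvalues_eq_sortedEigenvalues]
  rw [Equiv.sum_comp _ fun i : Fin _ => F (hH.sortedEigenvalues i)]
  exact Fin.sum_univ_eq_sum_range (fun i => F (hH.sortedEigenvalues i)) _

theorem exists_prod_eigenvalues_eq_prod_sortedEigenvalues {k : ℕ} (hk : k ≤ Fintype.card m) :
    ∃ f : Fin k → m, Injective f ∧
      ∏ i, hH.eigenvalues (f i) = ∏ i ∈ range k, hH.sortedEigenvalues i := by
  set e := Fintype.equivOfCardEq (Fintype.card_fin (Fintype.card m))
  refine ⟨fun i => e (Fin.castLE hk i), e.injective.comp (Fin.castLE_injective hk), ?_⟩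
  simp only [eigenvalues_eq_sortedEigenvalues, e, Equiv.symm_apply_apply]
  exact Fin.prod_univ_eq_prod_range (fun i => hH.sortedEigenvalues i) k

variable {hH} (h0 : ∀ j, 0 ≤ hH.eigenvalues j)
include h0

theorem sortedEigenvalues_nonneg (i : ℕ) : 0 ≤ hH.sortedEigenvalues i := by
  unfold sortedEigenvalues
  split_ifs with hi
  · simpa [eigenvalues] using h0 (Fintype.equivOfCardEq (Fintype.card_fin _) ⟨i, hi⟩)
  · rfl

theorem antitone_sortedEigenvalues : Antitone hH.sortedEigenvalues := by
  intro i j hij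
  by_cases hj : j < Fintype.card m
  · simp only [sortedEigenvalues, dif_pos hj, dif_pos (hij.trans_lt hj)]
    exact hH.eigenvalues₀_antitone (Fin.mk_le_mk.2 hij)
  · simpa [sortedEigenvalues, hj] using sortedEigenvalues_nonneg h0 i

theorem prod_eigenvalues_le_prod_sortedEigenvalues {k : ℕ} {g : Fin k → m} (hg : Injective g) :
    ∏ i, hH.eigenvalues (g i) ≤ ∏ i ∈ range k, hH.sortedEigenvalues i := by
  set e := (Fintype.equivOfCardEq (Fintype.card_fin (Fintype.card m))).symm
  have hφ : Injective fun i => (e (g i) : ℕ) := Fin.val_injective.comp (e.injective.comp hg)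
  calc ∏ i, hH.eigenvalues (g i)
      = ∏ j ∈ univ.image fun i => (e (g i) : ℕ), hH.sortedEigenvalues j := by
        rw [prod_image fun i _ j _ h => hφ h]
        simp only [eigenvalues_eq_sortedEigenvalues, e]
    _ ≤ ∏ i ∈ range k, hH.sortedEigenvalues i := by
        simpa [card_image_of_injective _ hφ] using prod_le_prod_range_card_of_antitone
          (antitone_sortedEigenvalues h0) (sortedEigenvalues_nonneg h0)
          (univ.image fun i => (e (g i) : ℕ))

end Matrix.IsHermitian

theorem conjTranspose_submatrix_mul_mul_submatrix {α l m : Type*} [Semiring α] [Star α]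
    [Fintype m] (V N : Matrix m m α) (f : l → m) :
    (V.submatrix id f)ᴴ * N * V.submatrix id f = (Vᴴ * N * V).submatrix f f := by
  ext i j
  simp [mul_apply]

section Horn

variable {𝕜 : Type*} [RCLike 𝕜] {n k : ℕ}

theorem re_det_conjTranspose_mul_mul_le {H : Matrix (Fin n) (Fin n) 𝕜} (hH : H.IsHermitian)
    (J : Matrix (Fin n) (Fin k) 𝕜) {b : ℝ}
    (hb : ∀ g : Fin k → Fin n, StrictMono g → ∏ i, hH.eigenvalues (g i) ≤ b) :
    RCLike.re (det (Jᴴ * H * J)) ≤ b * RCLike.re (det (Jᴴ * J)) := by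
  set u := hH.eigenvectorUnitary
  set W : Matrix (Fin n) (Fin k) 𝕜 := star (u : Matrix (Fin n) (Fin n) 𝕜) * J
  have hJHJ : Jᴴ * H * J = Wᴴ * diagonal (RCLike.ofReal ∘ hH.eigenvalues : Fin n → 𝕜) * W := by
    conv_lhs => rw [hH.spectral_theorem, Unitary.conjStarAlgAut_apply]
    simp only [W, conjTranspose_mul, star_eq_conjTranspose, conjTranspose_conjTranspose,
      Matrix.mul_assoc]
    rfl
  have hJJ : Jᴴ * J = Wᴴ * diagonal (fun _ : Fin n => (1 : 𝕜)) * W := by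
    simp only [W, diagonal_one, Matrix.mul_one, conjTranspose_mul, star_eq_conjTranspose,
      conjTranspose_conjTranspose, Matrix.mul_assoc]
    rw [← Matrix.mul_assoc (u : Matrix (Fin n) (Fin n) 𝕜), ← star_eq_conjTranspose,
      Unitary.mul_star_self_of_mem u.2, Matrix.one_mul]
  have hnorm (z : 𝕜) : star z * z = ((‖z‖ ^ 2 : ℝ) : 𝕜) := by
    rw [RCLike.star_def, RCLike.conj_mul]
    push_cast
    rfl
  rw [hJHJ, hJJ, det_conjTranspose_mul_diagonal_mul, det_conjTranspose_mul_diagonal_mul]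
  simp only [hnorm, Function.comp_apply, prod_const_one, one_mul,
    ← RCLike.ofReal_prod, ← RCLike.ofReal_mul, ← RCLike.ofReal_sum, RCLike.ofReal_re, mul_sum]
  exact sum_le_sum fun g hg =>
    mul_le_mul_of_nonneg_right (hb g (mem_strictMonoTuples.mp hg)) (sq_nonneg _)

theorem prod_eigenvalues_conjTranspose_mul_self_mul_le (A B : Matrix (Fin n) (Fin n) 𝕜)
    {f : Fin k → Fin n} (hf : Injective f) {a b : ℝ}
    (ha : ∀ g : Fin k → Fin n, StrictMono g →
      ∏ i, (isHermitian_conjTranspose_mul_self A).eigenvalues (g i) ≤ a)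
    (hb : ∀ g : Fin k → Fin n, StrictMono g →
      ∏ i, (isHermitian_conjTranspose_mul_self B).eigenvalues (g i) ≤ b) :
    ∏ i, (isHermitian_conjTranspose_mul_self (A * B)).eigenvalues (f i) ≤ a * b := by
  set hN := isHermitian_conjTranspose_mul_self (A * B)
  set u := hN.eigenvectorUnitary
  set Q := (u : Matrix (Fin n) (Fin n) 𝕜).submatrix id f
  have hQNQ : Qᴴ * ((A * B)ᴴ * (A * B)) * Q = diagonal (RCLike.ofReal ∘ hN.eigenvalues ∘ f) := by
    have h := hN.conjStarAlgAut_star_eigenvectorUnitary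
    rw [Unitary.conjStarAlgAut_apply, Unitary.coe_star, star_star, star_eq_conjTranspose] at h
    rw [conjTranspose_submatrix_mul_mul_submatrix, h, submatrix_diagonal _ _ hf]
    rfl
  have hQQ : Qᴴ * Q = 1 := by
    rw [← Matrix.mul_one Qᴴ, conjTranspose_submatrix_mul_mul_submatrix, Matrix.mul_one,
      ← star_eq_conjTranspose, Unitary.coe_star_mul_self, submatrix_one _ hf]
  have ha0 : 0 ≤ a := (prod_nonneg fun i _ => eigenvalues_conjTranspose_mul_self_nonneg A _).trans
    (ha _ (strictMono_comp_sort_of_injective hf))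
  calc ∏ i, hN.eigenvalues (f i)
      = RCLike.re (det (Qᴴ * ((A * B)ᴴ * (A * B)) * Q)) := by
        rw [hQNQ, det_diagonal]
        simp only [Function.comp_apply, ← RCLike.ofReal_prod, RCLike.ofReal_re]
    _ = RCLike.re (det ((B * Q)ᴴ * (Aᴴ * A) * (B * Q))) := by
        simp only [conjTranspose_mul, Matrix.mul_assoc]
    _ ≤ a * RCLike.re (det ((B * Q)ᴴ * (B * Q))) := re_det_conjTranspose_mul_mul_le _ _ ha
    _ = a * RCLike.re (det (Qᴴ * (Bᴴ * B) * Q)) := by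
        simp only [conjTranspose_mul, Matrix.mul_assoc]
    _ ≤ a * (b * RCLike.re (det (Qᴴ * Q))) :=
        mul_le_mul_of_nonneg_left (re_det_conjTranspose_mul_mul_le _ _ hb) ha0
    _ = a * b := by rw [hQQ, det_one, RCLike.one_re, mul_one]

end Horn

theorem prod_sortedEigenvalues_conjTranspose_mul_self_mul_le {𝕜 : Type*} [RCLike 𝕜] {n : ℕ}
    (A B : Matrix (Fin n) (Fin n) 𝕜) (k : ℕ) :
    ∏ i ∈ range k, (isHermitian_conjTranspose_mul_self (A * B)).sortedEigenvalues i ≤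
      (∏ i ∈ range k, (isHermitian_conjTranspose_mul_self A).sortedEigenvalues i) *
        ∏ i ∈ range k, (isHermitian_conjTranspose_mul_self B).sortedEigenvalues i := by
  by_cases hk : k ≤ Fintype.card (Fin n)
  · obtain ⟨f, hf, hprod⟩ := IsHermitian.exists_prod_eigenvalues_eq_prod_sortedEigenvalues
      (isHermitian_conjTranspose_mul_self (A * B)) hk
    rw [← hprod]
    exact prod_eigenvalues_conjTranspose_mul_self_mul_le A B hf
      (fun g hg => IsHermitian.prod_eigenvalues_le_prod_sortedEigenvalues
        (eigenvalues_conjTranspose_mul_self_nonneg A) hg.injective)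
      (fun g hg => IsHermitian.prod_eigenvalues_le_prod_sortedEigenvalues
        (eigenvalues_conjTranspose_mul_self_nonneg B) hg.injective)
  · have hzero : (isHermitian_conjTranspose_mul_self (A * B)).sortedEigenvalues
        (Fintype.card (Fin n)) = 0 := by
      simp [IsHermitian.sortedEigenvalues]
    rw [prod_eq_zero (mem_range.2 (not_le.1 hk)) hzero]
    exact mul_nonneg
      (prod_nonneg fun i _ => IsHermitian.sortedEigenvalues_nonneg
        (eigenvalues_conjTranspose_mul_self_nonneg A) i)
      (prod_nonneg fun i _ => IsHermitian.sortedEigenvalues_nonneg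
        (eigenvalues_conjTranspose_mul_self_nonneg B) i)

section LogMajorization

variable {x y : ℕ → ℝ} {n : ℕ}

theorem sum_range_mul_nonpos_of_antitone {c d : ℕ → ℝ} (hc : Antitone c) (hc0 : ∀ i, 0 ≤ c i)
    (hd : ∀ k ≤ n, ∑ i ∈ range k, d i ≤ 0) : ∑ i ∈ range n, c i * d i ≤ 0 := by
  have h := sum_range_by_parts c d n
  simp only [smul_eq_mul] at h
  have hlast : c (n - 1) * ∑ i ∈ range n, d i ≤ 0 :=
    mul_nonpos_of_nonneg_of_nonpos (hc0 _) (hd n le_rfl)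
  have hsteps : 0 ≤ ∑ i ∈ range (n - 1), (c (i + 1) - c i) * ∑ j ∈ range (i + 1), d j :=
    sum_nonneg fun i hi => mul_nonneg_of_nonpos_of_nonpos
      (sub_nonpos.2 (hc (Nat.le_succ i))) (hd _ (by have := mem_range.1 hi; omega))
  linarith

theorem sum_range_le_sum_range_of_prod_le_prod_of_pos (hx : Antitone x) (hx0 : ∀ i, 0 ≤ x i)
    (hxpos : ∀ i < n, 0 < x i) (hypos : ∀ i < n, 0 < y i)
    (h : ∀ k ≤ n, ∏ i ∈ range k, x i ≤ ∏ i ∈ range k, y i) :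
    ∑ i ∈ range n, x i ≤ ∑ i ∈ range n, y i := by
  have hlog : ∀ k ≤ n, ∑ i ∈ range k, (Real.log (x i) - Real.log (y i)) ≤ 0 := by
    intro k hk
    have hx' : ∀ i ∈ range k, 0 < x i := fun i hi => hxpos i ((mem_range.1 hi).trans_le hk)
    have hy' : ∀ i ∈ range k, 0 < y i := fun i hi => hypos i ((mem_range.1 hi).trans_le hk)
    rw [sum_sub_distrib, ← Real.log_prod fun i hi => (hx' i hi).ne',
      ← Real.log_prod fun i hi => (hy' i hi).ne', sub_nonpos]
    exact Real.log_le_log (prod_pos hx') (h k hk)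
  -- `log t ≤ t - 1` at `t = y i / x i`
  have hterm : ∀ i ∈ range n, x i - y i ≤ x i * (Real.log (x i) - Real.log (y i)) := by
    intro i hi
    have hxi := hxpos i (mem_range.1 hi)
    have hyi := hypos i (mem_range.1 hi)
    have h := Real.log_le_sub_one_of_pos (div_pos hyi hxi)
    rw [Real.log_div hyi.ne' hxi.ne', le_sub_iff_add_le, le_div_iff₀ hxi] at h
    linarith
  have := (sum_le_sum hterm).trans (sum_range_mul_nonpos_of_antitone hx hx0 hlog)
  rw [sum_sub_distrib] at this
  linarith

theorem sum_range_le_sum_range_of_prod_le_prod (hx : Antitone x) (hx0 : ∀ i, 0 ≤ x i)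
    (hy0 : ∀ i, 0 ≤ y i) (h : ∀ k ≤ n, ∏ i ∈ range k, x i ≤ ∏ i ∈ range k, y i) :
    ∑ i ∈ range n, x i ≤ ∑ i ∈ range n, y i := by
  classical
  have hex : ∃ m, n ≤ m ∨ x m = 0 := ⟨n, .inl le_rfl⟩
  set m := Nat.find hex
  have hmn : m ≤ n := Nat.find_min' hex (.inl le_rfl)
  have hxpos : ∀ i < m, 0 < x i := fun i hi =>
    (hx0 i).lt_of_ne' fun hxi => Nat.find_min hex hi (.inr hxi)
  have hxzero : ∀ i ∈ range n, i ∉ range m → x i = 0 := by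
    intro i hin him
    rw [mem_range] at hin him
    rcases Nat.find_spec hex with hnm | hxm
    · omega
    · exact le_antisymm (hxm ▸ hx (not_lt.1 him)) (hx0 i)
  have hypos : ∀ i < m, 0 < y i := by
    intro i hi
    have hprod : 0 < ∏ j ∈ range (i + 1), y j :=
      (prod_pos fun j hj => hxpos j ((mem_range.1 hj).trans_le hi)).trans_le (h _ (by omega))
    exact (hy0 i).lt_of_ne' fun hyi => hprod.ne' (prod_eq_zero (self_mem_range_succ i) hyi)
  calc ∑ i ∈ range n, x i
      = ∑ i ∈ range m, x i := (sum_subset (range_subset_range.2 hmn) hxzero).symm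
    _ ≤ ∑ i ∈ range m, y i := sum_range_le_sum_range_of_prod_le_prod_of_pos hx hx0 hxpos hypos
        fun k hk => h k (hk.trans hmn)
    _ ≤ ∑ i ∈ range n, y i :=
        sum_le_sum_of_subset_of_nonneg (range_subset_range.2 hmn) fun i _ _ => hy0 i

theorem sum_range_rpow_le_sum_range_rpow_of_prod_le_prod (hx : Antitone x) (hx0 : ∀ i, 0 ≤ x i)
    (hy0 : ∀ i, 0 ≤ y i) (h : ∀ k ≤ n, ∏ i ∈ range k, x i ≤ ∏ i ∈ range k, y i) {r : ℝ}
    (hr : 0 ≤ r) : ∑ i ∈ range n, x i ^ r ≤ ∑ i ∈ range n, y i ^ r := by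
  refine sum_range_le_sum_range_of_prod_le_prod
    (fun i j hij => Real.rpow_le_rpow (hx0 j) (hx hij) hr) (fun i => Real.rpow_nonneg (hx0 i) r)
    (fun i => Real.rpow_nonneg (hy0 i) r) fun k hk => ?_
  rw [Real.finsetProd_rpow _ _ (fun i _ => hx0 i), Real.finsetProd_rpow _ _ (fun i _ => hy0 i)]
  exact Real.rpow_le_rpow (prod_nonneg fun i _ => hx0 i) (h k hk) hr

end LogMajorization

theorem traceAbsPow_eq_sum_sortedEigenvalues {n : ℕ} (A : Matrix (Fin n) (Fin n) ℂ) (p : ℝ) :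
    traceAbsPow A p =
      ∑ i ∈ range n, (isHermitian_conjTranspose_mul_self A).sortedEigenvalues i ^ (p / 2) := by
  have h (t : ℝ) (ht : 0 ≤ t) : Real.sqrt t ^ p = t ^ (p / 2) := by
    rw [Real.sqrt_eq_rpow, ← Real.rpow_mul ht, one_div_mul_eq_div]
  simp only [traceAbsPow, singVal, h _ (eigenvalues_conjTranspose_mul_self_nonneg A _)]
  rw [IsHermitian.sum_comp_eigenvalues _ fun t => t ^ (p / 2), Fintype.card_fin]

theorem stmt5 {n : ℕ} (A : Matrix (Fin n) (Fin n) ℂ) (p : ℝ) (hp : 2 ≤ p) :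
    traceAbsPow (A * A) (p / 2) ≤ traceAbsPow A p := by
  have hA := eigenvalues_conjTranspose_mul_self_nonneg A
  have hAA := eigenvalues_conjTranspose_mul_self_nonneg (A * A)
  have hsq (i : ℕ) : (isHermitian_conjTranspose_mul_self A).sortedEigenvalues i ^ (p / 2) =
      ((isHermitian_conjTranspose_mul_self A).sortedEigenvalues i ^ 2) ^ (p / 2 / 2) := by
    rw [← Real.rpow_natCast, ← Real.rpow_mul (IsHermitian.sortedEigenvalues_nonneg hA i)]
    ring_nf
  rw [traceAbsPow_eq_sum_sortedEigenvalues, traceAbsPow_eq_sum_sortedEigenvalues]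
  simp only [hsq]
  refine sum_range_rpow_le_sum_range_rpow_of_prod_le_prod
    (IsHermitian.antitone_sortedEigenvalues hAA) (IsHermitian.sortedEigenvalues_nonneg hAA)
    (fun i => sq_nonneg _) (fun k _ => ?_) (by linarith)
  rw [prod_pow, sq]
  exact prod_sortedEigenvalues_conjTranspose_mul_self_mul_le A A k
end

section
/- Let A be an n×n complex matrix with eigenvalues λ₁, …, λₙ (with multiplicity) and let p ≥ 1. Then Σᵢ |λᵢ|^p ≤ (rank A)^(1/2) · ‖A‖_{2p}^p. -/
/-!
By Schur triangularisation the eigenvalues of `A` are the diagonal entries `⟪uᵢ, A uᵢ⟫` of `A` in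
some orthonormal basis `u`; as the matrix is then triangular, at most `rank A` of them are nonzero.
Writing `A wⱼ = sⱼ vⱼ` (singular value decomposition), each `|⟪uᵢ, A uᵢ⟫|` is at most `∑ⱼ dᵢⱼ sⱼ`
for the doubly stochastic matrix `dᵢⱼ = (|⟪uᵢ, wⱼ⟫|² + |⟪uᵢ, vⱼ⟫|²) / 2`, so Jensen's inequality
gives Weyl's inequality `∑ |λᵢ|^q ≤ ∑ sⱼ^q` for `q ≥ 1`. Cauchy–Schwarz over the nonzero eigenvalues, with `q = 2p`,
finishes the proof.
-/

open Matrix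

open Module Finset Polynomial
open scoped InnerProductSpace

section OrthonormalFamilies

variable {𝕜 E : Type*} [RCLike 𝕜] [NormedAddCommGroup E] [InnerProductSpace 𝕜 E]

theorem orthonormal_finCons {m : ℕ} {v : E} (hv : ‖v‖ = 1) {w : Fin m → E}
    (hw : Orthonormal 𝕜 w) (hvw : ∀ i, ⟪v, w i⟫_𝕜 = 0) :
    Orthonormal 𝕜 (Fin.cons v w : Fin (m + 1) → E) := by
  refine ⟨Fin.cases hv hw.1, fun i j hij => ?_⟩
  cases i using Fin.cases <;> cases j using Fin.cases
  · exact absurd rfl hij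
  · exact hvw _
  · rw [Fin.cons_succ, Fin.cons_zero, ← inner_conj_symm, hvw, map_zero]
  · exact hw.2 fun h => hij (congrArg _ h)

variable [FiniteDimensional 𝕜 E] {ι : Type*} [Fintype ι]

theorem Orthonormal.exists_orthonormalBasis_eq (hι : finrank 𝕜 E = Fintype.card ι) {w : ι → E}
    (hw : Orthonormal 𝕜 w) :
    ∃ u : OrthonormalBasis ι 𝕜 E, ⇑u = w := by
  obtain ⟨u, hu⟩ := (hw.comp _ Subtype.val_injective).exists_orthonormalBasis_extension_of_card_eq
    (s := Set.univ) hι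
  exact ⟨u, funext fun i => hu i trivial⟩

theorem exists_orthonormalBasis_eq_norm_smul_of_pairwise_inner_eq_zero
    (hι : finrank 𝕜 E = Fintype.card ι) {w : ι → E} (hw : Pairwise fun j k => ⟪w j, w k⟫_𝕜 = 0) :
    ∃ V : OrthonormalBasis ι 𝕜 E, ∀ j, w j = (‖w j‖ : 𝕜) • V j := by
  set v : ι → E := fun j => (‖w j‖⁻¹ : 𝕜) • w j
  have hv : Orthonormal 𝕜 ({j | w j ≠ 0}.domRestrict v) := by
    refine ⟨fun j => norm_smul_inv_norm j.2, fun j k hjk => ?_⟩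
    simp [Set.domRestrict, v, inner_smul_left, inner_smul_right, hw (Subtype.coe_ne_coe.mpr hjk)]
  obtain ⟨V, hV⟩ := hv.exists_orthonormalBasis_extension_of_card_eq hι
  refine ⟨V, fun j => ?_⟩
  by_cases hj : w j = 0
  · simp [hj]
  · rw [hV j hj, smul_smul, mul_inv_cancel₀ (by simpa using hj), one_smul]

end OrthonormalFamilies

section Schur

theorem LinearMap.exists_orthonormalBasis_inner_apply_eq_zero_of_lt {E : Type*}
    [NormedAddCommGroup E] [InnerProductSpace ℂ E] [FiniteDimensional ℂ E] {m : ℕ}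
    (hm : finrank ℂ E = m) (f : E →ₗ[ℂ] E) :
    ∃ u : OrthonormalBasis (Fin m) ℂ E, ∀ i j, i < j → ⟪u j, f (u i)⟫_ℂ = 0 := by
  induction m generalizing E with
  | zero => exact ⟨(stdOrthonormalBasis ℂ E).reindex (finCongr hm), fun i => i.elim0⟩
  | succ m ih =>
    have : Nontrivial E := Module.finrank_pos_iff (R := ℂ) |>.mp (by omega)
    obtain ⟨μ, hμ⟩ := Module.End.exists_eigenvalue f
    obtain ⟨v₀, hv₀⟩ := hμ.exists_hasEigenvector
    set v : E := (‖v₀‖⁻¹ : ℂ) • v₀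
    have hv : ‖v‖ = 1 := by simp [v, norm_smul, norm_ne_zero_iff.mpr hv₀.2]
    have hfv : f v = μ • v := by rw [map_smul, hv₀.apply_eq_smul, smul_comm]
    -- triangularise the compression of `f` to `vᗮ`, then put `v` in front
    set K := (ℂ ∙ v)ᗮ
    have : Fact (finrank ℂ E = m + 1) := ⟨hm⟩
    obtain ⟨u', hu'⟩ := ih (Submodule.finrank_orthogonal_span_singleton (ne_zero_of_norm_ne_zero
      (hv.trans_ne one_ne_zero))) (K.orthogonalProjectionOnto.toLinearMap ∘ₗ f ∘ₗ K.subtype)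
    have hvK (i) : ⟪v, u' i⟫_ℂ = 0 := Submodule.mem_orthogonal_singleton_iff_inner_right.mp (u' i).2
    obtain ⟨u, hu⟩ := (orthonormal_finCons hv (u'.orthonormal.comp_linearIsometry K.subtypeₗᵢ)
      hvK).exists_orthonormalBasis_eq (by simp [hm])
    refine ⟨u, fun i j hij => ?_⟩
    rw [hu]
    cases j using Fin.cases with
    | zero => exact absurd hij (Fin.not_lt_zero i)
    | succ j =>
      cases i using Fin.cases with
      | zero =>
        rw [Fin.cons_succ, Fin.cons_zero, hfv, inner_smul_right, ← inner_conj_symm]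
        simp [hvK]
      | succ i =>
        simpa [← K.inner_starProjection_left_eq_right, K.starProjection_eq_self_iff.mpr (u' j).2]
          using hu' i j (Fin.succ_lt_succ_iff.mp hij)

theorem Matrix.IsUpperTriangular.card_diag_ne_zero_le_rank {ι K : Type*} [Fintype ι]
    [LinearOrder ι] [Field K] [DecidableEq K] {M : Matrix ι ι K} (hM : M.IsUpperTriangular) :
    #{i | M i i ≠ 0} ≤ M.rank := by
  set S : Finset ι := {i | M i i ≠ 0}
  set N := M.submatrix ((↑) : S → ι) ((↑) : S → ι)
  have hdet : IsUnit N.det := by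
    rw [Matrix.det_of_isUpperTriangular (M := N) fun i j h => hM h, isUnit_iff_ne_zero,
      Finset.prod_ne_zero_iff]
    exact fun i _ => (Finset.mem_filter.mp i.2).2
  calc #S = N.rank := by
        rw [N.rank_of_isUnit ((Matrix.isUnit_iff_isUnit_det _).mpr hdet), Fintype.card_coe]
    _ ≤ M.rank := M.rank_submatrix_le _ _

theorem LinearMap.toMatrix_orthonormalBasis_apply {𝕜 E ι : Type*} [RCLike 𝕜]
    [NormedAddCommGroup E] [InnerProductSpace 𝕜 E] [Fintype ι] [DecidableEq ι]
    (u : OrthonormalBasis ι 𝕜 E) (f : E →ₗ[𝕜] E) (i j : ι) :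
    LinearMap.toMatrix u.toBasis u.toBasis f i j = ⟪u i, f (u j)⟫_𝕜 := by
  rw [LinearMap.toMatrix_apply, OrthonormalBasis.coe_toBasis_repr_apply,
    OrthonormalBasis.repr_apply_apply, OrthonormalBasis.coe_toBasis]

section
variable {ι 𝕜 : Type*} [Fintype ι] [DecidableEq ι] [RCLike 𝕜]

theorem Matrix.charpoly_toMatrix_toEuclideanLin (A : Matrix ι ι 𝕜)
    (b : Basis ι 𝕜 (EuclideanSpace 𝕜 ι)) :
    (LinearMap.toMatrix b b (toEuclideanLin A)).charpoly = A.charpoly := by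
  rw [LinearMap.charpoly_toMatrix, toEuclideanLin_eq_toLin_orthonormal, Matrix.charpoly_toLin]

theorem Matrix.rank_toMatrix_toEuclideanLin (A : Matrix ι ι 𝕜)
    (b : Basis ι 𝕜 (EuclideanSpace 𝕜 ι)) :
    (LinearMap.toMatrix b b (toEuclideanLin A)).rank = A.rank := by
  rw [rank_eq_finrank_range_toLin _ b b, toLin_toMatrix, toEuclideanLin_eq_toLin_orthonormal,
    ← rank_eq_finrank_range_toLin]

end

theorem Matrix.exists_orthonormalBasis_charpoly_roots_eq {n : ℕ} (A : Matrix (Fin n) (Fin n) ℂ) :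
    ∃ u : OrthonormalBasis (Fin n) ℂ (EuclideanSpace ℂ (Fin n)),
      A.charpoly.roots = univ.val.map (fun i => ⟪u i, toEuclideanLin A (u i)⟫_ℂ) ∧
      #{i | ⟪u i, toEuclideanLin A (u i)⟫_ℂ ≠ 0} ≤ A.rank := by
  obtain ⟨u, hu⟩ :=
    (toEuclideanLin A).exists_orthonormalBasis_inner_apply_eq_zero_of_lt finrank_euclideanSpace_fin
  have hT (i j : Fin n) : LinearMap.toMatrix u.toBasis u.toBasis (toEuclideanLin A) i j =
      ⟪u i, toEuclideanLin A (u j)⟫_ℂ := LinearMap.toMatrix_orthonormalBasis_apply u _ i j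
  have hT_tri : (LinearMap.toMatrix u.toBasis u.toBasis (toEuclideanLin A)).IsUpperTriangular :=
    fun i j hji => (hT i j).trans (hu j i hji)
  refine ⟨u, ?_, ?_⟩
  · rw [← charpoly_toMatrix_toEuclideanLin A u.toBasis, charpoly_of_isUpperTriangular _ hT_tri,
      Finset.prod_eq_multiset_prod]
    simp only [hT]
    simpa only [Multiset.map_map, Function.comp_def]
      using roots_multiset_prod_X_sub_C (univ.val.map fun i => ⟪u i, toEuclideanLin A (u i)⟫_ℂ)
  · simpa [hT, rank_toMatrix_toEuclideanLin] using hT_tri.card_diag_ne_zero_le_rank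

end Schur

section SingularValues

variable {𝕜 ι : Type*} [RCLike 𝕜] [Fintype ι] [DecidableEq ι]

theorem Matrix.inner_toEuclideanLin_eigenvectorBasis_conjTranspose_mul_self (A : Matrix ι ι 𝕜)
    (x : EuclideanSpace 𝕜 ι) (k : ι) :
    ⟪toEuclideanLin A x,
        toEuclideanLin A ((isHermitian_conjTranspose_mul_self A).eigenvectorBasis k)⟫_𝕜 =
      (isHermitian_conjTranspose_mul_self A).eigenvalues k *
        ⟪x, (isHermitian_conjTranspose_mul_self A).eigenvectorBasis k⟫_𝕜 := by
  rw [← LinearMap.adjoint_inner_right, ← toEuclideanLin_conjTranspose_eq_adjoint,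
    ← LinearMap.comp_apply, ← Matrix.toLpLin_mul_same, toLpLin_apply,
    (isHermitian_conjTranspose_mul_self A).mulVec_eigenvectorBasis, WithLp.toLp_smul,
    WithLp.toLp_ofLp, RCLike.real_smul_eq_coe_smul (K := 𝕜), inner_smul_right]

theorem Matrix.exists_orthonormalBasis_toEuclideanLin_eigenvectorBasis_eq_sqrt_smul
    (A : Matrix ι ι 𝕜) :
    ∃ V : OrthonormalBasis ι 𝕜 (EuclideanSpace 𝕜 ι), ∀ j,
      toEuclideanLin A ((isHermitian_conjTranspose_mul_self A).eigenvectorBasis j) =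
        (√((isHermitian_conjTranspose_mul_self A).eigenvalues j) : 𝕜) • V j := by
  have key := inner_toEuclideanLin_eigenvectorBasis_conjTranspose_mul_self A
  set W := (isHermitian_conjTranspose_mul_self A).eigenvectorBasis
  have hW : Pairwise fun j k => ⟪toEuclideanLin A (W j), toEuclideanLin A (W k)⟫_𝕜 = 0 :=
    fun j k hjk => by beta_reduce; rw [key, W.orthonormal.2 hjk, mul_zero]
  obtain ⟨V, hV⟩ :=
    exists_orthonormalBasis_eq_norm_smul_of_pairwise_inner_eq_zero finrank_euclideanSpace hW
  refine ⟨V, fun j => ?_⟩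
  rw [hV j, norm_eq_sqrt_re_inner (𝕜 := 𝕜), key, inner_self_eq_norm_sq_to_K, W.orthonormal.1 j]
  simp

end SingularValues

section Weyl

theorem sum_rpow_le_sum_rpow_of_le_mulVec {ι : Type*} [Fintype ι] [DecidableEq ι]
    {D : Matrix ι ι ℝ} (hD : D ∈ doublyStochastic ℝ ι) {x s : ι → ℝ} (hx : 0 ≤ x) (hs : 0 ≤ s)
    (hxs : x ≤ D *ᵥ s) {q : ℝ} (hq : 1 ≤ q) :
    ∑ i, x i ^ q ≤ ∑ j, s j ^ q :=
  calc ∑ i, x i ^ q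
      ≤ ∑ i, (D *ᵥ s) i ^ q :=
        sum_le_sum fun i _ => Real.rpow_le_rpow (hx i) (hxs i) (by linarith)
    _ ≤ ∑ i, (D *ᵥ fun j => s j ^ q) i := sum_le_sum fun i _ =>
        (convexOn_rpow hq).map_sum_le (fun j _ => nonneg_of_mem_doublyStochastic hD)
          (sum_row_of_mem_doublyStochastic hD i) (fun j _ => Set.mem_Ici.mpr (hs j))
    _ = ∑ j, s j ^ q := sum_mulVec_of_mem_doublyStochastic hD

variable {𝕜 E ι : Type*} [RCLike 𝕜] [NormedAddCommGroup E] [InnerProductSpace 𝕜 E] [Fintype ι]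

theorem OrthonormalBasis.of_sq_norm_inner_mem_doublyStochastic [DecidableEq ι]
    (B C : OrthonormalBasis ι 𝕜 E) :
    Matrix.of (fun i j => ‖⟪B i, C j⟫_𝕜‖ ^ 2) ∈ doublyStochastic ℝ ι := by
  refine mem_doublyStochastic_iff_sum.mpr ⟨fun i j => sq_nonneg _, fun i => ?_, fun j => ?_⟩
  · simp [C.sum_sq_norm_inner_left, B.orthonormal.1 i]
  · simp [B.sum_sq_norm_inner_right, C.orthonormal.1 j]

theorem norm_inner_self_apply_le_of_apply_eq_smul {f : E →ₗ[𝕜] E} {W V : OrthonormalBasis ι 𝕜 E}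
    {s : ι → ℝ} (hs : 0 ≤ s) (hf : ∀ j, f (W j) = (s j : 𝕜) • V j) (x : E) :
    ‖⟪x, f x⟫_𝕜‖ ≤ ∑ j, s j * (‖⟪x, W j⟫_𝕜‖ * ‖⟪x, V j⟫_𝕜‖) := by
  have hfx : f x = ∑ j, (⟪W j, x⟫_𝕜 * s j) • V j := by
    conv_lhs => rw [← W.sum_repr' x]
    simp [map_sum, map_smul, hf, smul_smul]
  rw [hfx, inner_sum]
  refine (norm_sum_le _ _).trans (sum_le_sum fun j _ => le_of_eq ?_)
  rw [inner_smul_right, norm_mul, norm_mul, RCLike.norm_ofReal, abs_of_nonneg (hs j),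
    norm_inner_symm]
  ring

theorem OrthonormalBasis.sum_norm_inner_apply_self_rpow_le [DecidableEq ι]
    (u : OrthonormalBasis ι 𝕜 E) {f : E →ₗ[𝕜] E} {W V : OrthonormalBasis ι 𝕜 E} {s : ι → ℝ}
    (hs : 0 ≤ s) (hf : ∀ j, f (W j) = (s j : 𝕜) • V j) {q : ℝ} (hq : 1 ≤ q) :
    ∑ i, ‖⟪u i, f (u i)⟫_𝕜‖ ^ q ≤ ∑ j, s j ^ q := by
  set P := Matrix.of fun i j => ‖⟪u i, W j⟫_𝕜‖ ^ 2
  set Q := Matrix.of fun i j => ‖⟪u i, V j⟫_𝕜‖ ^ 2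
  have hD : (1 / 2 : ℝ) • P + (1 / 2 : ℝ) • Q ∈ doublyStochastic ℝ ι :=
    convex_doublyStochastic (u.of_sq_norm_inner_mem_doublyStochastic W)
      (u.of_sq_norm_inner_mem_doublyStochastic V) (by norm_num) (by norm_num) (by norm_num)
  refine sum_rpow_le_sum_rpow_of_le_mulVec hD (fun i => norm_nonneg _) hs (fun i => ?_) hq
  refine (norm_inner_self_apply_le_of_apply_eq_smul hs hf (u i)).trans (sum_le_sum fun j _ => ?_)
  have := mul_le_mul_of_nonneg_left (two_mul_le_add_sq ‖⟪u i, W j⟫_𝕜‖ ‖⟪u i, V j⟫_𝕜‖) (hs j)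
  simp only [P, Q, Matrix.add_apply, Matrix.smul_apply, of_apply, smul_eq_mul]
  linarith

end Weyl

theorem sum_rpow_le_sqrt_card_mul_sqrt_sum_rpow_two_mul {ι : Type*} [Fintype ι] {x : ι → ℝ}
    (hx : 0 ≤ x) {p : ℝ} (hp : 0 < p) :
    ∑ i, x i ^ p ≤ √(#{i | x i ≠ 0} : ℝ) * √(∑ i, x i ^ (2 * p)) := by
  have hsq (i) : (x i ^ p) ^ 2 = x i ^ (2 * p) := by
    rw [← Real.rpow_natCast, ← Real.rpow_mul (hx i), mul_comm]; norm_num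
  calc ∑ i, x i ^ p = ∑ i with x i ≠ 0, 1 * x i ^ p := by
        simp only [one_mul]
        refine (sum_filter_of_ne fun i _ h => ?_).symm
        contrapose! h
        rw [h, Real.zero_rpow hp.ne']
    _ ≤ √(∑ i with x i ≠ 0, 1 ^ 2) * √(∑ i with x i ≠ 0, (x i ^ p) ^ 2) :=
        Real.sum_mul_le_sqrt_mul_sqrt _ _ _
    _ ≤ √(#{i | x i ≠ 0} : ℝ) * √(∑ i, x i ^ (2 * p)) := by
        simp only [one_pow, sum_const, nsmul_one, hsq]
        gcongr
        · exact fun i _ _ => Real.rpow_nonneg (hx i) _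
        · exact subset_univ _

theorem schattenNorm_two_mul_rpow {n : ℕ} (A : Matrix (Fin n) (Fin n) ℂ) {p : ℝ} (hp : p ≠ 0) :
    schattenNorm A (2 * p) ^ p = √(traceAbsPow A (2 * p)) := by
  have hnonneg : 0 ≤ traceAbsPow A (2 * p) :=
    sum_nonneg fun i _ => Real.rpow_nonneg (Real.sqrt_nonneg _) _
  rw [schattenNorm, ← Real.rpow_mul hnonneg, Real.sqrt_eq_rpow]
  field_simp

theorem stmt7 {n : ℕ} (A : Matrix (Fin n) (Fin n) ℂ) (p : ℝ) (hp : 1 ≤ p) :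
    ((A.charpoly.roots.map fun z => ‖z‖ ^ p).sum) ≤
      (A.rank : ℝ) ^ ((1 : ℝ)/2) * schattenNorm A (2 * p) ^ p := by
  obtain ⟨u, hroots, hrank⟩ := A.exists_orthonormalBasis_charpoly_roots_eq
  obtain ⟨V, hV⟩ := A.exists_orthonormalBasis_toEuclideanLin_eigenvectorBasis_eq_sqrt_smul
  have hweyl : ∑ i, ‖⟪u i, toEuclideanLin A (u i)⟫_ℂ‖ ^ (2 * p) ≤ traceAbsPow A (2 * p) :=
    u.sum_norm_inner_apply_self_rpow_le (fun j => Real.sqrt_nonneg _) hV (by linarith)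
  have hcard : #{i | ‖⟪u i, toEuclideanLin A (u i)⟫_ℂ‖ ≠ 0} ≤ A.rank := by
    simpa only [ne_eq, norm_eq_zero] using hrank
  rw [hroots, Multiset.map_map, schattenNorm_two_mul_rpow A (by linarith), ← Real.sqrt_eq_rpow]
  calc ∑ i, ‖⟪u i, toEuclideanLin A (u i)⟫_ℂ‖ ^ p
      ≤ √(#{i | ‖⟪u i, toEuclideanLin A (u i)⟫_ℂ‖ ≠ 0} : ℝ) *
          √(∑ i, ‖⟪u i, toEuclideanLin A (u i)⟫_ℂ‖ ^ (2 * p)) :=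
        sum_rpow_le_sqrt_card_mul_sqrt_sum_rpow_two_mul (fun i => norm_nonneg _) (by linarith)
    _ ≤ √(A.rank : ℝ) * √(traceAbsPow A (2 * p)) := by gcongr
end

section
/- For bounded linear operators A, B on a complex Hilbert space, ‖A + B‖ ≤ √(‖A*A + B*B‖ + 2·w(A*B)), where w denotes the numerical radius. -/
/-!
Expanding the square, `‖(A + B) x‖² = Re ⟪(A* A + B* B) x, x⟫ + 2 Re ⟪A* B x, x⟫`, because
`B* A = (A* B)*` and `Re ⟪T* x, x⟫ = Re ⟪T x, x⟫`. The first term is at most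
`‖A* A + B* B‖ ‖x‖²` and the second at most `2 w(A* B) ‖x‖²`.
-/

open ContinuousLinearMap

/-- The numerical radius $w(T)=\sup\{|\langle Tx,x\rangle| : \|x\|=1\}$. -/
noncomputable def numRadius {H : Type*} [NormedAddCommGroup H] [InnerProductSpace ℂ H]
    (T : H →L[ℂ] H) : ℝ :=
  ⨆ x : {x : H // ‖x‖ = 1}, ‖(inner ℂ (T x.1) x.1 : ℂ)‖

theorem star_add_mul_add_eq {R : Type*} [NonUnitalRing R] [StarRing R] (a b : R) :
    star (a + b) * (a + b) = (star a * a + star b * b) + (star a * b + star (star a * b)) := by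
  simp only [star_add, star_mul, star_star, add_mul, mul_add]
  abel

namespace ContinuousLinearMap

open RCLike

variable {𝕜 E : Type*} [RCLike 𝕜] [NormedAddCommGroup E] [InnerProductSpace 𝕜 E]

theorem norm_inner_apply_self_le (T : E →L[𝕜] E) (x : E) :
    ‖inner 𝕜 (T x) x‖ ≤ ‖T‖ * ‖x‖ ^ 2 :=
  calc ‖inner 𝕜 (T x) x‖ ≤ ‖T x‖ * ‖x‖ := norm_inner_le_norm _ _
    _ ≤ ‖T‖ * ‖x‖ * ‖x‖ := by gcongr; exact T.le_opNorm x
    _ = ‖T‖ * ‖x‖ ^ 2 := by ring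

theorem re_inner_adjoint_apply_self [CompleteSpace E] (T : E →L[𝕜] E) (x : E) :
    re (inner 𝕜 (adjoint T x) x) = re (inner 𝕜 (T x) x) := by
  rw [adjoint_inner_left, ← inner_conj_symm, conj_re]

theorem opNorm_le_sqrt_of_forall_sq_le {F G : Type*} [SeminormedAddCommGroup F]
    [SeminormedAddCommGroup G] [NormedSpace 𝕜 F] [NormedSpace 𝕜 G] (T : F →L[𝕜] G) {C : ℝ}
    (h : ∀ x, ‖T x‖ ^ 2 ≤ C * ‖x‖ ^ 2) : ‖T‖ ≤ √C :=
  opNorm_le_bound _ (Real.sqrt_nonneg C) fun x => by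
    rw [← Real.sqrt_sq (norm_nonneg x), ← Real.sqrt_mul' _ (sq_nonneg _)]
    exact Real.le_sqrt_of_sq_le (h x)

end ContinuousLinearMap

theorem norm_inner_apply_self_le_numRadius {H : Type*} [NormedAddCommGroup H]
    [InnerProductSpace ℂ H] (T : H →L[ℂ] H) (x : H) :
    ‖inner ℂ (T x) x‖ ≤ numRadius T * ‖x‖ ^ 2 := by
  have hbdd : BddAbove (Set.range fun u : {u : H // ‖u‖ = 1} => ‖inner ℂ (T u.1) u.1‖) := by
    refine ⟨‖T‖, ?_⟩
    rintro _ ⟨⟨u, hu⟩, rfl⟩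
    simpa [hu] using T.norm_inner_apply_self_le u
  rcases eq_or_ne x 0 with rfl | hx
  · simp
  have hx' : ‖x‖ ≠ 0 := norm_ne_zero_iff.mpr hx
  set u : H := (‖x‖ : ℂ)⁻¹ • x
  have hu : ‖u‖ = 1 := by
    rw [norm_smul, norm_inv, Complex.norm_real, norm_norm, inv_mul_cancel₀ hx']
  have hxu : x = (‖x‖ : ℂ) • u := by rw [smul_inv_smul₀ (by exact_mod_cast hx')]
  have : ‖inner ℂ (T u) u‖ ≤ numRadius T := le_ciSup hbdd ⟨u, hu⟩
  rw [hxu, map_smul, inner_smul_left, inner_smul_right, norm_mul, norm_mul]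
  simp only [Complex.conj_ofReal, Complex.norm_real, norm_norm, norm_smul, hu]
  nlinarith [norm_nonneg x]

theorem stmt10 {H : Type*} [NormedAddCommGroup H] [InnerProductSpace ℂ H] [CompleteSpace H]
    (A B : H →L[ℂ] H) :
    ‖A + B‖ ≤ Real.sqrt (‖adjoint A * A + adjoint B * B‖ + 2 * numRadius (adjoint A * B)) := by
  refine opNorm_le_sqrt_of_forall_sq_le _ fun x => ?_
  have hsplit : adjoint (A + B) * (A + B) =
      (adjoint A * A + adjoint B * B) + (adjoint A * B + adjoint (adjoint A * B)) := by
    simpa only [star_eq_adjoint] using star_add_mul_add_eq A B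
  have hP := (adjoint A * A + adjoint B * B).norm_inner_apply_self_le x
  have hW := norm_inner_apply_self_le_numRadius (adjoint A * B) x
  calc ‖(A + B) x‖ ^ 2 = RCLike.re (inner ℂ ((adjoint (A + B) * (A + B)) x) x) :=
        apply_norm_sq_eq_inner_adjoint_left _ x
    _ = RCLike.re (inner ℂ ((adjoint A * A + adjoint B * B) x) x)
          + 2 * RCLike.re (inner ℂ ((adjoint A * B) x) x) := by
        rw [hsplit, add_apply _ (_ + _), add_apply (adjoint A * B), inner_add_left, inner_add_left,
          map_add, map_add, re_inner_adjoint_apply_self]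
        ring
    _ ≤ ‖adjoint A * A + adjoint B * B‖ * ‖x‖ ^ 2 + 2 * (numRadius (adjoint A * B) * ‖x‖ ^ 2) := by
        gcongr
        · exact (RCLike.re_le_norm _).trans hP
        · exact (RCLike.re_le_norm _).trans hW
    _ = _ := by ring
end

section
/- For bounded linear operators A, B on a complex Hilbert space, √(‖A*A + B*B‖ + 2·w(A*B)) ≤ √(‖A‖² + ‖B‖² + 2‖A*B‖) ≤ ‖A‖ + ‖B‖, where w is the numerical radius. -/
open ContinuousLinearMap

lemma numRadius_le_norm {H : Type*} [NormedAddCommGroup H] [InnerProductSpace ℂ H]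
    (T : H →L[ℂ] H) : numRadius T ≤ ‖T‖ := by
  refine Real.iSup_le (fun ⟨x, hx⟩ => ?_) (norm_nonneg T)
  calc ‖(inner ℂ (T x) x : ℂ)‖ ≤ ‖T x‖ * ‖x‖ := norm_inner_le_norm _ _
    _ ≤ ‖T‖ * ‖x‖ * ‖x‖ := by gcongr; exact T.le_opNorm x
    _ = ‖T‖ := by rw [hx]; ring

section Adjoint

variable {H : Type*} [NormedAddCommGroup H] [InnerProductSpace ℂ H] [CompleteSpace H]

lemma norm_adjoint_mul_le (A B : H →L[ℂ] H) : ‖adjoint A * B‖ ≤ ‖A‖ * ‖B‖ :=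
  (opNorm_comp_le _ _).trans_eq (by rw [LinearIsometryEquiv.norm_map])

lemma norm_adjoint_mul_self_add_le (A B : H →L[ℂ] H) :
    ‖adjoint A * A + adjoint B * B‖ ≤ ‖A‖ ^ 2 + ‖B‖ ^ 2 :=
  (norm_add_le _ _).trans_eq <| by
    rw [sq, sq, ← norm_adjoint_comp_self A, ← norm_adjoint_comp_self B]; rfl

end Adjoint

theorem stmt11 {H : Type*} [NormedAddCommGroup H] [InnerProductSpace ℂ H] [CompleteSpace H]
    (A B : H →L[ℂ] H) :
    Real.sqrt (‖adjoint A * A + adjoint B * B‖ + 2 * numRadius (adjoint A * B)) ≤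
      Real.sqrt (‖A‖ ^ 2 + ‖B‖ ^ 2 + 2 * ‖adjoint A * B‖) ∧
    Real.sqrt (‖A‖ ^ 2 + ‖B‖ ^ 2 + 2 * ‖adjoint A * B‖) ≤ ‖A‖ + ‖B‖ := by
  constructor
  · gcongr
    · exact norm_adjoint_mul_self_add_le A B
    · exact numRadius_le_norm _
  · have hAB := norm_adjoint_mul_le A B
    calc Real.sqrt (‖A‖ ^ 2 + ‖B‖ ^ 2 + 2 * ‖adjoint A * B‖)
        ≤ Real.sqrt ((‖A‖ + ‖B‖) ^ 2) :=
          Real.sqrt_le_sqrt (by linarith [add_sq ‖A‖ ‖B‖])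
      _ = ‖A‖ + ‖B‖ := Real.sqrt_sq (by positivity)
end

section
/- Let A be a bounded linear operator on a complex Hilbert space with Re(A)·Im(A) = 0, where Re(A) = (A + A*)/2 and Im(A) = (A − A*)/(2i). Then ‖A‖ = √((1/2)‖A*A + AA*‖). -/
open ContinuousLinearMap

theorem stmt12 {H : Type*} [NormedAddCommGroup H] [InnerProductSpace ℂ H] [CompleteSpace H]
    (A : H →L[ℂ] H)
    (h : ((1/2 : ℂ) • (A + adjoint A)) * ((1/(2 * Complex.I) : ℂ) • (A - adjoint A)) = 0) :
    ‖A‖ = Real.sqrt ((1/2) * ‖adjoint A * A + A * adjoint A‖) := by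
  -- Step 1: (A + A*)(A - A*) = 0
  have h1 : (A + adjoint A) * (A - adjoint A) = 0 := by
    rw [smul_mul_smul_comm] at h
    rcases smul_eq_zero.mp h with hc | h0
    · exfalso
      have : (1/2 : ℂ) * (1/(2 * Complex.I)) ≠ 0 := by
        simp [Complex.I_ne_zero]
      exact this hc
    · exact h0
  -- Step 2: adjoint gives (A - A*)(A + A*) = 0
  have h2 : (A - adjoint A) * (A + adjoint A) = 0 := by
    have hs := congrArg star h1
    simp only [star_mul, star_zero, star_sub, star_add, ← star_eq_adjoint, star_star] at hs
    have h3 : -((A - star A) * (A + star A)) = 0 := by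
      rw [← neg_mul, neg_sub]
      simpa [add_comm] using hs
    rw [star_eq_adjoint] at h3
    exact neg_eq_zero.mp h3
  -- Step 3: A is normal
  have hn : adjoint A * A = A * adjoint A := by
    have key : (adjoint A * A - A * adjoint A) + (adjoint A * A - A * adjoint A)
        = (A + adjoint A) * (A - adjoint A) - (A - adjoint A) * (A + adjoint A) := by
      noncomm_ring
    rw [h1, h2, sub_zero] at key
    have key2 : (2 : ℂ) • (adjoint A * A - A * adjoint A) = 0 := by
      rw [two_smul]; exact key
    rcases smul_eq_zero.mp key2 with hc | h0
    · exact absurd hc two_ne_zero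
    · exact sub_eq_zero.mp h0
  -- Step 4: compute the norm
  have hsum : adjoint A * A + A * adjoint A = (2 : ℂ) • (adjoint A * A) := by
    rw [two_smul, ← hn]
  rw [hsum, norm_smul]
  have hnorm : ‖adjoint A * A‖ = ‖A‖ * ‖A‖ := norm_adjoint_comp_self A
  rw [hnorm]
  have h2n : ‖(2:ℂ)‖ = 2 := by norm_num
  rw [h2n]
  rw [show (1/2 : ℝ) * (2 * (‖A‖ * ‖A‖)) = ‖A‖ * ‖A‖ by ring,
    Real.sqrt_mul_self (norm_nonneg A)]
end

section
/- For a bounded linear operator A on a complex Hilbert space, the numerical radius satisfies w(A) ≤ (1/2)·‖ |A| + |A*| ‖, where |A| = (A*A)^(1/2). -/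
/-!
Kato's mixed Schwarz inequality `|⟨Ax, x⟩|² ≤ ⟨|A|x, x⟩ ⟨|A*|x, x⟩` and AM–GM give
`|⟨Ax, x⟩| ≤ ½ ⟨(|A| + |A*|)x, x⟩ ≤ ½ ‖|A| + |A*|‖` for every unit vector `x`.

For the mixed Schwarz inequality, let `T = |A| + ε` (invertible, positive) and `w = T⁻¹A*x`.
Cauchy–Schwarz for the positive form `⟨T·, ·⟩` gives
`|⟨A*x, x⟩|² = |⟨Tw, x⟩|² ≤ ⟨Tw, w⟩ ⟨Tx, x⟩`, and `⟨Tw, w⟩ = ⟨A T⁻¹ A* x, x⟩`.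
The intertwining relation `A f(A*A) = f(AA*) A` (true for polynomials, hence by Weierstrass for
continuous `f`) turns `A T⁻¹ A*` into `g(AA*)` with `g t = t / (√t + ε) ≤ √t`, so
`⟨Tw, w⟩ ≤ ⟨|A*|x, x⟩`. Finally let `ε → 0`.
-/

set_option synthInstance.maxHeartbeats 1000000
open ContinuousLinearMap

open Filter Topology Set
open scoped InnerProductSpace

theorem SemiconjBy.aeval {R B : Type*} [CommSemiring R] [Semiring B] [Algebra R B] {x a b : B}
    (h : SemiconjBy x a b) (p : Polynomial R) :
    SemiconjBy x (Polynomial.aeval a p) (Polynomial.aeval b p) := by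
  induction p using Polynomial.induction_on' with
  | add p q hp hq => simpa only [map_add] using hp.add_right hq
  | monomial n r =>
    simpa only [Polynomial.aeval_monomial] using
      SemiconjBy.mul_right (Algebra.commute_algebraMap_right r x) (h.pow_right n)

theorem exists_seq_polynomial_tendstoUniformlyOn {K : Set ℝ} (hK : IsCompact K) {f : ℝ → ℝ}
    (hf : Continuous f) :
    ∃ p : ℕ → Polynomial ℝ, TendstoUniformlyOn (fun n x => (p n).eval x) f atTop K := by
  obtain ⟨r, hr⟩ := hK.isBounded.subset_closedBall 0
  rw [Real.closedBall_eq_Icc] at hr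
  choose p hp using fun n : ℕ =>
    exists_polynomial_near_of_continuousOn _ _ f hf.continuousOn (1 / (n + 1))
      Nat.one_div_pos_of_nat
  refine ⟨p, Metric.tendstoUniformlyOn_iff.mpr fun ε hε => ?_⟩
  obtain ⟨N, hN⟩ := exists_nat_one_div_lt hε
  filter_upwards [eventually_ge_atTop N] with n hn x hx
  rw [dist_comm, Real.dist_eq]
  calc |(p n).eval x - f x| < 1 / (n + 1) := hp n x (hr hx)
    _ ≤ 1 / (N + 1) := Nat.one_div_le_one_div hn
    _ < ε := hN

section Intertwining

variable {B : Type*} [Ring B] [StarRing B] [Algebra ℝ B] [TopologicalSpace B]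
  [ContinuousFunctionalCalculus ℝ B IsSelfAdjoint] [IsTopologicalRing B] [T2Space B]

theorem SemiconjBy.cfc_real {x a b : B} (h : SemiconjBy x a b) (ha : IsSelfAdjoint a)
    (hb : IsSelfAdjoint b) {f : ℝ → ℝ} (hf : Continuous f) :
    SemiconjBy x (cfc f a) (cfc f b) := by
  obtain ⟨p, hp⟩ := exists_seq_polynomial_tendstoUniformlyOn
    ((ContinuousFunctionalCalculus.isCompact_spectrum a).union
      (ContinuousFunctionalCalculus.isCompact_spectrum b)) hf
  have hlim (c : B) (hc : spectrum ℝ c ⊆ spectrum ℝ a ∪ spectrum ℝ b) :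
      Tendsto (fun n => cfc (p n).eval c) atTop (𝓝 (cfc f c)) :=
    tendsto_cfc_fun (hp.mono hc) (.of_forall fun n => (p n).continuous.continuousOn)
  have hpoly (n : ℕ) : x * cfc (p n).eval a = cfc (p n).eval b * x := by
    rw [cfc_polynomial .., cfc_polynomial ..]
    exact (h.aeval (p n)).eq
  exact tendsto_nhds_unique (((hlim a subset_union_left).const_mul x).congr hpoly)
    ((hlim b subset_union_right).mul_const x)

end Intertwining

theorem mul_cfc_mul_star_le_sqrt {A : Type*} [CStarAlgebra A] [PartialOrder A] [StarOrderedRing A]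
    (x : A) {ε : ℝ} (hε : 0 < ε) :
    x * cfc (fun t => (√t + ε)⁻¹) (star x * x) * star x ≤ CFC.sqrt (x * star x) := by
  have hg : Continuous fun t : ℝ => (√t + ε)⁻¹ :=
    (Real.continuous_sqrt.add continuous_const).inv₀
      fun t => (add_pos_of_nonneg_of_pos (Real.sqrt_nonneg t) hε).ne'
  have hx : SemiconjBy x (star x * x) (x * star x) := (mul_assoc _ _ _).symm
  rw [(hx.cfc_real (.star_mul_self x) (.mul_star_self x) hg).eq, mul_assoc,
    CFC.sqrt_eq_real_sqrt _, cfcₙ_eq_cfc]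
  conv_lhs => arg 2; rw [← cfc_id' ℝ (x * star x)]
  rw [← cfc_mul _ _ _ hg.continuousOn]
  refine cfc_mono fun t ht => ?_
  have ht0 : 0 ≤ t := spectrum_nonneg_of_nonneg (mul_star_self_nonneg x) ht
  rw [inv_mul_le_iff₀ (add_pos_of_nonneg_of_pos (Real.sqrt_nonneg t) hε)]
  nlinarith [Real.mul_self_sqrt ht0, Real.sqrt_nonneg t]

namespace ContinuousLinearMap

section RCLike

variable {𝕜 E : Type*} [RCLike 𝕜] [NormedAddCommGroup E] [InnerProductSpace 𝕜 E]

theorem re_inner_apply_self_le_norm (T : E →L[𝕜] E) (x : E) :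
    RCLike.re ⟪T x, x⟫_𝕜 ≤ ‖T‖ * ‖x‖ ^ 2 :=
  calc RCLike.re ⟪T x, x⟫_𝕜 ≤ ‖⟪T x, x⟫_𝕜‖ := RCLike.re_le_norm _
    _ ≤ ‖T x‖ * ‖x‖ := norm_inner_le_norm _ _
    _ ≤ ‖T‖ * ‖x‖ * ‖x‖ := by gcongr; exact le_opNorm T x
    _ = ‖T‖ * ‖x‖ ^ 2 := by ring

theorem re_inner_apply_self_mono {S T : E →L[𝕜] E} (h : S ≤ T) (x : E) :
    RCLike.re ⟪S x, x⟫_𝕜 ≤ RCLike.re ⟪T x, x⟫_𝕜 := by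
  have := ((le_def S T).mp h).re_inner_nonneg_left x
  rwa [sub_apply, inner_sub_left, map_sub, sub_nonneg] at this

end RCLike

variable {H : Type*} [NormedAddCommGroup H] [InnerProductSpace ℂ H] [CompleteSpace H]

theorem norm_inner_apply_sq_le_of_nonneg {T : H →L[ℂ] H} (hT : 0 ≤ T) (u v : H) :
    ‖⟪T u, v⟫_ℂ‖ ^ 2 ≤ RCLike.re ⟪T u, u⟫_ℂ * RCLike.re ⟪T v, v⟫_ℂ := by
  obtain ⟨S, rfl⟩ := CStarAlgebra.nonneg_iff_eq_star_mul_self.mp hT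
  simp only [star_eq_adjoint, mul_apply_eq_comp, adjoint_inner_left, inner_self_eq_norm_sq]
  calc ‖⟪S u, S v⟫_ℂ‖ ^ 2 ≤ (‖S u‖ * ‖S v‖) ^ 2 := by gcongr; exact norm_inner_le_norm _ _
    _ = ‖S u‖ ^ 2 * ‖S v‖ ^ 2 := by ring

theorem norm_inner_apply_self_sq_le_of_pos (A : H →L[ℂ] H) (x : H) {ε : ℝ} (hε : 0 < ε) :
    ‖⟪A x, x⟫_ℂ‖ ^ 2 ≤
      (RCLike.re ⟪CFC.abs A x, x⟫_ℂ + ε * ‖x‖ ^ 2) * RCLike.re ⟪CFC.abs (star A) x, x⟫_ℂ := by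
  have hpos (t : ℝ) : 0 < √t + ε := add_pos_of_nonneg_of_pos (Real.sqrt_nonneg t) hε
  have hf : Continuous fun t : ℝ => √t + ε := Real.continuous_sqrt.add continuous_const
  have hg : Continuous fun t : ℝ => (√t + ε)⁻¹ := hf.inv₀ fun t => (hpos t).ne'
  set a := star A * A
  set T := cfc (fun t => √t + ε) a
  set G := cfc (fun t => (√t + ε)⁻¹) a
  have hT : T = CFC.abs A + algebraMap ℝ _ ε := by
    rw [CFC.abs, CFC.sqrt_eq_real_sqrt a, cfcₙ_eq_cfc, ← cfc_const ε a,
      ← cfc_add a _ _ Real.continuous_sqrt.continuousOn]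
  have hTG : T * G = 1 := by
    rw [← cfc_mul _ _ a hf.continuousOn hg.continuousOn,
      cfc_congr (g := fun _ => (1 : ℝ)) fun t _ => mul_inv_cancel₀ (hpos t).ne', cfc_const_one ℝ a]
  have hT0 : 0 ≤ T := cfc_nonneg fun t _ => (hpos t).le
  set w := G (star A x)
  have hw : T w = star A x := by rw [← mul_apply_eq_comp, hTG, one_apply_eq_self]
  have hTw : RCLike.re ⟪T w, w⟫_ℂ ≤ RCLike.re ⟪CFC.abs (star A) x, x⟫_ℂ :=
    calc RCLike.re ⟪T w, w⟫_ℂ = RCLike.re ⟪(A * G * star A) x, x⟫_ℂ := by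
          rw [hw, star_eq_adjoint, adjoint_inner_left, inner_re_symm]; rfl
      _ ≤ RCLike.re ⟪CFC.sqrt (A * star A) x, x⟫_ℂ :=
          re_inner_apply_self_mono (mul_cfc_mul_star_le_sqrt A hε) x
      _ = RCLike.re ⟪CFC.abs (star A) x, x⟫_ℂ := by rw [CFC.abs, star_star]
  have hTx : RCLike.re ⟪T x, x⟫_ℂ = RCLike.re ⟪CFC.abs A x, x⟫_ℂ + ε * ‖x‖ ^ 2 := by
    rw [hT, add_apply, inner_add_left, map_add, Algebra.algebraMap_eq_smul_one, _root_.smul_apply,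
      one_apply_eq_self, RCLike.real_smul_eq_coe_smul (K := ℂ), inner_smul_real_left,
      RCLike.smul_re, inner_self_eq_norm_sq]
  calc ‖⟪A x, x⟫_ℂ‖ ^ 2 = ‖⟪T w, x⟫_ℂ‖ ^ 2 := by
        rw [hw, star_eq_adjoint, adjoint_inner_left, norm_inner_symm]
    _ ≤ RCLike.re ⟪T w, w⟫_ℂ * RCLike.re ⟪T x, x⟫_ℂ := norm_inner_apply_sq_le_of_nonneg hT0 w x
    _ ≤ _ := by
        rw [mul_comm, hTx]
        exact mul_le_mul_of_nonneg_left hTw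
          (hTx ▸ ((nonneg_iff_isPositive T).mp hT0).re_inner_nonneg_left x)

theorem norm_inner_apply_self_sq_le (A : H →L[ℂ] H) (x : H) :
    ‖⟪A x, x⟫_ℂ‖ ^ 2 ≤ RCLike.re ⟪CFC.abs A x, x⟫_ℂ * RCLike.re ⟪CFC.abs (star A) x, x⟫_ℂ := by
  set b := RCLike.re ⟪CFC.abs A x, x⟫_ℂ
  set c := RCLike.re ⟪CFC.abs (star A) x, x⟫_ℂ
  have hlim : Tendsto (fun ε : ℝ => (b + ε * ‖x‖ ^ 2) * c) (𝓝[>] 0) (𝓝 (b * c)) :=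
    tendsto_nhdsWithin_of_tendsto_nhds <| Continuous.tendsto' (by fun_prop) _ _ (by simp)
  exact ge_of_tendsto hlim <| eventually_nhdsWithin_of_forall fun ε hε =>
    norm_inner_apply_self_sq_le_of_pos A x hε

theorem norm_inner_apply_self_le_half_norm (A : H →L[ℂ] H) {x : H} (hx : ‖x‖ = 1) :
    ‖⟪A x, x⟫_ℂ‖ ≤ 1 / 2 * ‖CFC.abs A + CFC.abs (star A)‖ := by
  set b := RCLike.re ⟪CFC.abs A x, x⟫_ℂ
  set c := RCLike.re ⟪CFC.abs (star A) x, x⟫_ℂ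
  have hb : 0 ≤ b := ((nonneg_iff_isPositive _).mp (CFC.abs_nonneg A)).re_inner_nonneg_left x
  have hc : 0 ≤ c := ((nonneg_iff_isPositive _).mp (CFC.abs_nonneg (star A))).re_inner_nonneg_left x
  have hsq : ‖⟪A x, x⟫_ℂ‖ ^ 2 ≤ b * c := norm_inner_apply_self_sq_le A x
  have hsum : b + c ≤ ‖CFC.abs A + CFC.abs (star A)‖ := by
    simpa only [add_apply, inner_add_left, map_add, hx, one_pow, mul_one] using
      re_inner_apply_self_le_norm (CFC.abs A + CFC.abs (star A)) x
  nlinarith [norm_nonneg ⟪A x, x⟫_ℂ, sq_nonneg (b - c)]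

end ContinuousLinearMap

theorem stmt13 {H : Type*} [NormedAddCommGroup H] [InnerProductSpace ℂ H] [CompleteSpace H]
    (A : H →L[ℂ] H) :
    numRadius A ≤ (1/2) * ‖CFC.sqrt (adjoint A * A) + CFC.sqrt (A * adjoint A)‖ := by
  have h (x : {x : H // ‖x‖ = 1}) := norm_inner_apply_self_le_half_norm A x.2
  simp only [CFC.abs, star_eq_adjoint, adjoint_adjoint] at h
  exact Real.iSup_le h (by positivity)
end

section
/- For a bounded linear operator A on a complex Hilbert space, w(A) ≤ (1/2)‖A‖ + (1/2)‖A²‖^(1/2), where w is the numerical radius. -/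
/-!
For a unit vector `u`, the map `y ↦ 2⟪u, y⟫ u - y` is the reflection in the line through `u`,
hence an isometry. Writing `B (2⟪u, B u⟫ u) = B (B u) + B (2⟪u, B u⟫ u - B u)` therefore gives
`2 |⟪B u, u⟫| ‖B u‖ ≤ ‖B²‖ + ‖B‖ ‖B u‖`, and comparing `‖B u‖` with `‖B²‖^(1/2)` turns this into
`2 |⟪B u, u⟫| ≤ ‖B‖ + ‖B²‖^(1/2)` for every unit vector `u`.
-/

open ContinuousLinearMap

section

variable {𝕜 E : Type*} [RCLike 𝕜] [NormedAddCommGroup E] [InnerProductSpace 𝕜 E]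

local notation "⟪" x ", " y "⟫" => inner 𝕜 x y

theorem norm_two_inner_smul_sub_self {u : E} (hu : ‖u‖ = 1) (y : E) :
    ‖(2 * ⟪u, y⟫) • u - y‖ = ‖y‖ := by
  have := ((𝕜 ∙ u).reflection).norm_map y
  rwa [Submodule.reflection_apply, Submodule.starProjection_unit_singleton 𝕜 hu, two_smul,
    ← add_smul, ← two_mul] at this

theorem two_mul_norm_inner_apply_self_mul_le (B : E →L[𝕜] E) {u : E} (hu : ‖u‖ = 1) :
    2 * ‖⟪B u, u⟫‖ * ‖B u‖ ≤ ‖B * B‖ + ‖B‖ * ‖B u‖ := by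
  set c : 𝕜 := 2 * ⟪u, B u⟫
  have hc : ‖c‖ = 2 * ‖⟪B u, u⟫‖ := by simp [c, norm_inner_symm]
  calc 2 * ‖⟪B u, u⟫‖ * ‖B u‖ = ‖B (c • u)‖ := by rw [map_smul, norm_smul, hc]
    _ = ‖(B * B) u + B (c • u - B u)‖ := by rw [map_sub, mul_apply_eq_comp, add_sub_cancel]
    _ ≤ ‖B * B‖ + ‖B‖ * ‖B u‖ := by
      grw [norm_add_le, le_opNorm, le_opNorm B, norm_two_inner_smul_sub_self hu, hu, mul_one]

theorem two_mul_norm_inner_apply_self_le (B : E →L[𝕜] E) {u : E} (hu : ‖u‖ = 1) :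
    2 * ‖⟪B u, u⟫‖ ≤ ‖B‖ + √‖B * B‖ := by
  have key := two_mul_norm_inner_apply_self_mul_le B hu
  have hzm : ‖⟪B u, u⟫‖ ≤ ‖B u‖ := by simpa [hu] using norm_inner_le_norm (𝕜 := 𝕜) (B u) u
  have hma : ‖B u‖ ≤ ‖B‖ := by simpa [hu] using B.le_opNorm u
  have hs := Real.sq_sqrt (norm_nonneg (B * B))
  rcases le_or_gt ‖B u‖ √‖B * B‖ with hms | hsm
  · linarith
  · nlinarith [Real.sqrt_nonneg ‖B * B‖]

end

theorem stmt14_general {H : Type*} [NormedAddCommGroup H] [InnerProductSpace ℂ H]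
    (A : H →L[ℂ] H) :
    numRadius A ≤ (1/2) * ‖A‖ + (1/2) * Real.sqrt ‖A * A‖ :=
  Real.iSup_le (fun x => by linarith [two_mul_norm_inner_apply_self_le A x.2]) (by positivity)

theorem stmt14 {H : Type*} [NormedAddCommGroup H] [InnerProductSpace ℂ H] [CompleteSpace H]
    (A : H →L[ℂ] H) :
    numRadius A ≤ (1/2) * ‖A‖ + (1/2) * Real.sqrt ‖A * A‖ :=
  stmt14_general A
end

section
/- If bounded linear operators A, B on a complex Hilbert space are norm-parallel (there exists λ with |λ| = 1 and ‖A + λB‖ = ‖A‖ + ‖B‖), then ‖A*A + B*B‖ = ‖A‖² + ‖B‖². -/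
/-!
Upper bound: the triangle inequality and the C*-identity `‖A* A‖ = ‖A‖²`.
Lower bound: `‖A x‖² + ‖B x‖² = re ⟪x, (A* A + B* B) x⟫ ≤ ‖A* A + B* B‖` for `‖x‖ ≤ 1`, and
norm-parallelism gives vectors `xₙ` in the unit ball with `‖(A + λB) xₙ‖ → ‖A‖ + ‖B‖`, which by the
triangle inequality forces `‖A xₙ‖ → ‖A‖` and `‖B xₙ‖ → ‖B‖`.
-/

open ContinuousLinearMap Filter Topology

namespace ContinuousLinearMap

section NormAdditive

variable {𝕜 E F : Type*} [DenselyNormedField 𝕜] [NormedAddCommGroup E] [NormedSpace 𝕜 E]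
  [SeminormedAddCommGroup F] [NormedSpace 𝕜 F] {A B : E →L[𝕜] F}

theorem exists_norm_sub_lt_apply_of_norm_add_eq (hAB : ‖A + B‖ = ‖A‖ + ‖B‖) {ε : ℝ}
    (hε : 0 < ε) : ∃ x : E, ‖x‖ ≤ 1 ∧ ‖A‖ - ε < ‖A x‖ ∧ ‖B‖ - ε < ‖B x‖ := by
  obtain ⟨x, hx, hnorming⟩ := (A + B).exists_lt_apply_of_lt_opNorm (sub_lt_self _ hε)
  have htriangle : ‖(A + B) x‖ ≤ ‖A x‖ + ‖B x‖ := norm_add_le _ _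
  have hA := A.unit_le_opNorm x hx.le
  have hB := B.unit_le_opNorm x hx.le
  exact ⟨x, hx.le, by linarith, by linarith⟩

theorem exists_seq_tendsto_norm_apply_of_norm_add_eq (hAB : ‖A + B‖ = ‖A‖ + ‖B‖) :
    ∃ x : ℕ → E, (∀ n, ‖x n‖ ≤ 1) ∧ Tendsto (fun n ↦ ‖A (x n)‖) atTop (𝓝 ‖A‖) ∧
      Tendsto (fun n ↦ ‖B (x n)‖) atTop (𝓝 ‖B‖) := by
  choose x hx hA hB using fun n : ℕ ↦
    exists_norm_sub_lt_apply_of_norm_add_eq hAB (Nat.one_div_pos_of_nat (n := n))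
  have squeeze : ∀ (C : E →L[𝕜] F), (∀ n : ℕ, ‖C‖ - 1 / (n + 1) < ‖C (x n)‖) →
      Tendsto (fun n ↦ ‖C (x n)‖) atTop (𝓝 ‖C‖) := fun C hC ↦
    tendsto_of_tendsto_of_tendsto_of_le_of_le
      (by simpa using tendsto_one_div_add_atTop_nhds_zero_nat.const_sub ‖C‖)
      tendsto_const_nhds (fun n ↦ (hC n).le) (fun n ↦ C.unit_le_opNorm _ (hx n))
  exact ⟨x, hx, squeeze A hA, squeeze B hB⟩

end NormAdditive

section Hilbert

variable {𝕜 E F : Type*} [RCLike 𝕜] [NormedAddCommGroup E] [InnerProductSpace 𝕜 E]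
  [CompleteSpace E] [NormedAddCommGroup F] [InnerProductSpace 𝕜 F] [CompleteSpace F]

theorem norm_apply_sq_add_norm_apply_sq_le_s16 (A B : E →L[𝕜] F) (x : E) :
    ‖A x‖ ^ 2 + ‖B x‖ ^ 2 ≤ ‖adjoint A ∘L A + adjoint B ∘L B‖ * ‖x‖ ^ 2 := by
  set T := adjoint A ∘L A + adjoint B ∘L B
  calc ‖A x‖ ^ 2 + ‖B x‖ ^ 2 = RCLike.re (inner 𝕜 x (T x)) := by
        rw [apply_norm_sq_eq_inner_adjoint_right, apply_norm_sq_eq_inner_adjoint_right,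
          add_apply, inner_add_right, map_add]
    _ ≤ ‖x‖ * ‖T x‖ := re_inner_le_norm _ _
    _ ≤ ‖x‖ * (‖T‖ * ‖x‖) := by gcongr; exact T.le_opNorm x
    _ = ‖T‖ * ‖x‖ ^ 2 := by ring

theorem norm_adjoint_comp_self_add_adjoint_comp_self_le (A B : E →L[𝕜] F) :
    ‖adjoint A ∘L A + adjoint B ∘L B‖ ≤ ‖A‖ ^ 2 + ‖B‖ ^ 2 := by
  simpa only [norm_adjoint_comp_self, sq] using norm_add_le (adjoint A ∘L A) (adjoint B ∘L B)

end Hilbert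

end ContinuousLinearMap

theorem stmt16 {H : Type*} [NormedAddCommGroup H] [InnerProductSpace ℂ H] [CompleteSpace H]
    (A B : H →L[ℂ] H)
    (h : ∃ lam : ℂ, ‖lam‖ = 1 ∧ ‖A + lam • B‖ = ‖A‖ + ‖B‖) :
    ‖adjoint A * A + adjoint B * B‖ = ‖A‖ ^ 2 + ‖B‖ ^ 2 := by
  obtain ⟨lam, hlam, hAB⟩ := h
  have hnorm_smul : ∀ x, ‖(lam • B) x‖ = ‖B x‖ := fun x ↦ by
    rw [smul_apply, norm_smul, hlam, one_mul]
  obtain ⟨x, hx, hA, hB⟩ := exists_seq_tendsto_norm_apply_of_norm_add_eq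
    (A := A) (B := lam • B) (by rwa [norm_smul, hlam, one_mul])
  simp only [hnorm_smul, norm_smul, hlam, one_mul] at hB
  refine le_antisymm (norm_adjoint_comp_self_add_adjoint_comp_self_le A B) ?_
  refine le_of_tendsto' ((hA.pow 2).add (hB.pow 2)) fun n ↦ ?_
  calc ‖A (x n)‖ ^ 2 + ‖B (x n)‖ ^ 2 ≤ ‖adjoint A * A + adjoint B * B‖ * ‖x n‖ ^ 2 :=
        norm_apply_sq_add_norm_apply_sq_le_s16 A B (x n)
    _ ≤ ‖adjoint A * A + adjoint B * B‖ :=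
        mul_le_of_le_one_right (norm_nonneg _) (pow_le_one₀ (norm_nonneg _) (hx n))
end

section
/- Let p(z) = zⁿ + aₙ z^(n−1) + … + a₂ z + a₁ be a monic complex polynomial of degree n ≥ 2, with zeros λ₁, …, λₙ (with multiplicity). Then Σᵢ |λᵢ| ≤ √(n·(n − 1 + Σᵢ |aᵢ|²)). -/
open Polynomial

/-!
The zeros `λ₀, …, λₙ₋₁` of `p` are the eigenvalues of its companion matrix `Cₚ`, i.e. of
multiplication by `X` on `ℂ[X] ⧸ (p)`. With `S d = ∏_{i<d} (X - λᵢ)` one has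
`X * S d = S (d + 1) + λ_d • S d` and `S n = p`, so `Cₚ` is triangular on the flag
`S (n-1), S (n-2), …, S 0` with diagonal `λ`. Gram–Schmidt turns this flag into an orthonormal
basis `u` with `⟪u d, Cₚ (u d)⟫ = λ_d`, whence Schur's inequality
`∑ |λᵢ|² ≤ ∑ ‖Cₚ (u d)‖² = ‖Cₚ‖²_HS = (n - 1) + ∑ |aᵢ|²`.
Cauchy–Schwarz, `(∑ |λᵢ|)² ≤ n ∑ |λᵢ|²`, finishes the proof.
-/

open Finset Module Submodule InnerProductSpace

lemma LinearMap.map_sub_smul_mem_span_Iio {R M ι : Type*} [CommRing R] [AddCommGroup M]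
    [Module R M] [PartialOrder ι] (T : M →ₗ[R] M) {v : ι → M} {μ : ι → R}
    (hT : ∀ k, T (v k) - μ k • v k ∈ span R (v '' Set.Iio k)) {k : ι} {x : M}
    (hx : x ∈ span R (v '' Set.Iic k)) : T x - μ k • x ∈ span R (v '' Set.Iio k) := by
  let S : M →ₗ[R] M := T - μ k • LinearMap.id
  change S x ∈ _
  refine (span_le (p := (span R (v '' Set.Iio k)).comap S)).mpr ?_ hx
  rintro _ ⟨j, hj, rfl⟩
  have hSj : S (v j) = (T (v j) - μ j • v j) + (μ j - μ k) • v j := by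
    simp only [S, LinearMap.sub_apply, LinearMap.smul_apply, LinearMap.id_apply, sub_smul]
    abel
  rw [SetLike.mem_coe, mem_comap, hSj]
  rcases (Set.mem_Iic.mp hj).eq_or_lt with rfl | hjk
  · simpa using hT j
  · exact add_mem (span_mono (Set.image_mono fun i hi => (Set.mem_Iio.mp hi).trans hjk) (hT j))
      (smul_mem _ _ (subset_span ⟨j, hjk, rfl⟩))

section InnerProductSpace

variable {𝕜 E : Type*} [RCLike 𝕜] [NormedAddCommGroup E] [InnerProductSpace 𝕜 E]

section FiniteDimensional

variable [FiniteDimensional 𝕜 E]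

lemma LinearMap.ofReal_sum_norm_apply_sq {ι : Type*} [Fintype ι] (T : E →ₗ[𝕜] E)
    (b : OrthonormalBasis ι 𝕜 E) :
    ((∑ i, ‖T (b i)‖ ^ 2 : ℝ) : 𝕜) = (T.adjoint ∘ₗ T).trace 𝕜 E := by
  simp [LinearMap.trace_eq_sum_inner _ b, LinearMap.adjoint_inner_right,
    inner_self_eq_norm_sq_to_K]

lemma LinearMap.sum_norm_apply_sq_eq {ι κ : Type*} [Fintype ι] [Fintype κ] (T : E →ₗ[𝕜] E)
    (b : OrthonormalBasis ι 𝕜 E) (c : OrthonormalBasis κ 𝕜 E) :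
    ∑ i, ‖T (b i)‖ ^ 2 = ∑ j, ‖T (c j)‖ ^ 2 :=
  RCLike.ofReal_injective <| by rw [T.ofReal_sum_norm_apply_sq b, T.ofReal_sum_norm_apply_sq c]

end FiniteDimensional

variable {ι : Type*} [LinearOrder ι] [LocallyFiniteOrderBot ι] [WellFoundedLT ι]

lemma inner_gramSchmidtNormed_map_self (T : E →ₗ[𝕜] E) {v : ι → E} {μ : ι → 𝕜}
    (hv : LinearIndependent 𝕜 v) (hT : ∀ k, T (v k) - μ k • v k ∈ span 𝕜 (v '' Set.Iio k))
    (k : ι) : inner 𝕜 (gramSchmidtNormed 𝕜 v k) (T (gramSchmidtNormed 𝕜 v k)) = μ k := by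
  set u := gramSchmidtNormed 𝕜 v k with hu_def
  have hu : u ∈ span 𝕜 (v '' Set.Iic k) := smul_mem _ _ (gramSchmidt_mem_span 𝕜 v le_rfl)
  have horth : span 𝕜 (v '' Set.Iio k) ≤ (𝕜 ∙ u)ᗮ := by
    rw [span_le]
    rintro _ ⟨j, hj, rfl⟩
    rw [SetLike.mem_coe, mem_orthogonal_singleton_iff_inner_right, hu_def, gramSchmidtNormed,
      inner_smul_left, gramSchmidt_inv_triangular 𝕜 v hj, mul_zero]
  have h0 : inner 𝕜 u (T u - μ k • u) = 0 :=
    mem_orthogonal_singleton_iff_inner_right.mp (horth (T.map_sub_smul_mem_span_Iio hT hu))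
  rwa [inner_sub_right, inner_smul_right, inner_self_eq_norm_sq_to_K,
    gramSchmidtNormed_unit_length k hv, RCLike.ofReal_one, one_pow, mul_one, sub_eq_zero] at h0

lemma LinearMap.sum_norm_sq_le_of_triangular [FiniteDimensional 𝕜 E] [Fintype ι] {κ : Type*}
    [Fintype κ] (T : E →ₗ[𝕜] E) {v : ι → E} {μ : ι → 𝕜} (hv : LinearIndependent 𝕜 v)
    (hcard : finrank 𝕜 E = Fintype.card ι)
    (hT : ∀ k, T (v k) - μ k • v k ∈ span 𝕜 (v '' Set.Iio k)) (b : OrthonormalBasis κ 𝕜 E) :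
    ∑ k, ‖μ k‖ ^ 2 ≤ ∑ i, ‖T (b i)‖ ^ 2 := by
  set u := gramSchmidtOrthonormalBasis hcard v
  have hu (k : ι) : u k = gramSchmidtNormed 𝕜 v k :=
    gramSchmidtOrthonormalBasis_apply hcard <| norm_ne_zero_iff.mp <| by
      rw [gramSchmidtNormed_unit_length k hv]; exact one_ne_zero
  calc ∑ k, ‖μ k‖ ^ 2 ≤ ∑ k, ‖T (u k)‖ ^ 2 := by
        gcongr with k
        calc ‖μ k‖ = ‖inner 𝕜 (u k) (T (u k))‖ := by
              rw [hu, inner_gramSchmidtNormed_map_self T hv hT]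
          _ ≤ ‖u k‖ * ‖T (u k)‖ := norm_inner_le_norm _ _
          _ = ‖T (u k)‖ := by rw [u.orthonormal.1 k, one_mul]
    _ = ∑ i, ‖T (b i)‖ ^ 2 := T.sum_norm_apply_sq_eq u b

end InnerProductSpace

lemma Multiset.exists_eq_map_range {α : Type*} [Nonempty α] (s : Multiset α) :
    ∃ f : ℕ → α, s = (range (card s)).map f := by
  induction s using Multiset.induction_on with
  | empty => exact ⟨fun _ => Classical.ofNonempty, rfl⟩
  | cons a t ih =>
    obtain ⟨f, hf⟩ := ih
    refine ⟨fun i => if i = card t then a else f i, ?_⟩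
    rw [card_cons, range_succ, map_cons, if_pos rfl, hf, card_map, card_range]
    congr 1
    exact map_congr rfl fun i hi => (if_neg (mem_range.mp hi).ne).symm

namespace Polynomial

section ModByMonic

variable {R : Type*} [CommRing R] [Nontrivial R]

lemma X_pow_modByMonic_of_lt {p : R[X]} (hp : p.Monic) {k : ℕ} (hk : k < p.natDegree) :
    X ^ k %ₘ p = X ^ k := by
  rw [modByMonic_eq_self_iff hp, degree_X_pow, degree_eq_natDegree hp.ne_zero]
  exact_mod_cast hk

lemma X_pow_natDegree_modByMonic {p : R[X]} (hp : p.Monic) :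
    X ^ p.natDegree %ₘ p = X ^ p.natDegree - p := by
  have hXn : (X ^ p.natDegree : R[X]).degree = p.degree := by
    rw [degree_X_pow, degree_eq_natDegree hp.ne_zero]
  refine (div_modByMonic_unique 1 _ hp ⟨by ring, ?_⟩).2
  exact hXn ▸ degree_sub_lt_left hXn (monic_X_pow _).ne_zero
    (by rw [leadingCoeff_X_pow, hp.leadingCoeff])

end ModByMonic

section Flag

variable {R : Type*} [CommRing R] [IsDomain R]

noncomputable def Sequence.ofRoots (f : ℕ → R) : Sequence R where
  elems' d := ∏ i ∈ range d, (X - C (f i))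
  degree_eq' d := by simp [degree_prod]

namespace Sequence

lemma ofRoots_apply (f : ℕ → R) (d : ℕ) : ofRoots f d = ∏ i ∈ range d, (X - C (f i)) := rfl

lemma ofRoots_monic (f : ℕ → R) (d : ℕ) : (ofRoots f d).Monic :=
  ofRoots_apply f d ▸ monic_prod_of_monic _ _ fun i _ => monic_X_sub_C (f i)

lemma X_mul_ofRoots (f : ℕ → R) (d : ℕ) :
    X * ofRoots f d = ofRoots f (d + 1) + C (f d) * ofRoots f d := by
  rw [ofRoots_apply, ofRoots_apply, prod_range_succ]
  ring

lemma ofRoots_modByMonic_of_lt (f : ℕ → R) {d n : ℕ} (hd : d < n) :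
    ofRoots f d %ₘ ofRoots f n = ofRoots f d := by
  rw [modByMonic_eq_self_iff (ofRoots_monic f n), degree_eq, degree_eq]
  exact_mod_cast hd

end Sequence

lemma Monic.exists_eq_ofRoots {p : R[X]} (hp : p.Monic) (hsplit : p.Splits) :
    ∃ f : ℕ → R, p.roots = (Multiset.range p.natDegree).map f ∧
      p = Sequence.ofRoots f p.natDegree := by
  have hcard : Multiset.card p.roots = p.natDegree := splits_iff_card_roots.mp hsplit
  obtain ⟨f, hf⟩ := p.roots.exists_eq_map_range
  rw [hcard] at hf
  refine ⟨f, hf, ?_⟩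
  calc p = (p.roots.map fun a => X - C a).prod :=
        (prod_multiset_X_sub_C_of_monic_of_roots_card_eq hp hcard).symm
    _ = _ := by rw [hf, Multiset.map_map, Sequence.ofRoots_apply, prod_eq_multiset_prod]; rfl

end Flag

variable {𝕜 : Type*} [RCLike 𝕜] (n : ℕ)

noncomputable def coeffVec : 𝕜[X] →ₗ[𝕜] EuclideanSpace 𝕜 (Fin n) where
  toFun q := WithLp.toLp 2 fun j => q.coeff j
  map_add' q r := by ext; simp
  map_smul' c q := by ext; simp

noncomputable def ofCoeffVec : EuclideanSpace 𝕜 (Fin n) →ₗ[𝕜] 𝕜[X] where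
  toFun f := ∑ j : Fin n, monomial j (f j)
  map_add' f g := by simp [sum_add_distrib]
  map_smul' c f := by simp [smul_sum, smul_monomial]

/-- For `p` monic of degree `n` this is the companion matrix of `p`: multiplication by `X` on
`𝕜[X] ⧸ (p)`, written in the basis `1, X, …, X ^ (n - 1)` of remainders modulo `p`. -/
noncomputable def companion (p : 𝕜[X]) :
    EuclideanSpace 𝕜 (Fin n) →ₗ[𝕜] EuclideanSpace 𝕜 (Fin n) :=
  coeffVec n ∘ₗ modByMonicHom p ∘ₗ LinearMap.mulLeft 𝕜 X ∘ₗ ofCoeffVec n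

variable {n}

@[simp] lemma coeffVec_apply (q : 𝕜[X]) (j : Fin n) : coeffVec n q j = q.coeff j := rfl

lemma ofCoeffVec_coeffVec {q : 𝕜[X]} (hq : q.degree < n) : ofCoeffVec n (coeffVec n q) = q := by
  ext i
  simp only [ofCoeffVec, LinearMap.coe_mk, AddHom.coe_mk, finsetSum_coeff, coeff_monomial,
    coeffVec_apply]
  by_cases hi : i < n
  · rw [Fintype.sum_eq_single ⟨i, hi⟩ fun j hj => if_neg fun h => hj (Fin.ext h), if_pos rfl]
  · rw [Fintype.sum_eq_zero _ fun j => if_neg (by omega), coeff_eq_zero_of_degree_lt]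
    exact hq.trans_le (by exact_mod_cast not_lt.mp hi)

lemma norm_coeffVec_sq (q : 𝕜[X]) : ‖coeffVec n q‖ ^ 2 = ∑ i ∈ range n, ‖q.coeff i‖ ^ 2 := by
  rw [EuclideanSpace.norm_eq, Real.sq_sqrt (by positivity)]
  exact Fin.sum_univ_eq_sum_range (fun i => ‖q.coeff i‖ ^ 2) n

lemma coeffVec_X_pow (k : Fin n) :
    coeffVec n (X ^ (k : ℕ)) = EuclideanSpace.basisFun (Fin n) 𝕜 k := by
  ext j
  simp [coeff_X_pow, Fin.ext_iff, eq_comm]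

lemma companion_coeffVec (p : 𝕜[X]) {q : 𝕜[X]} (hq : q.degree < n) :
    companion n p (coeffVec n q) = coeffVec n ((X * q) %ₘ p) := by
  simp [companion, ofCoeffVec_coeffVec hq]

lemma sum_norm_companion_basisFun_sq {p : 𝕜[X]} (hp : p.Monic) (hdeg : p.natDegree = n + 1) :
    ∑ k, ‖companion (n + 1) p (EuclideanSpace.basisFun _ 𝕜 k)‖ ^ 2 =
      n + ∑ i ∈ range (n + 1), ‖p.coeff i‖ ^ 2 := by
  have hlt (k : Fin (n + 1)) : (X ^ (k : ℕ) : 𝕜[X]).degree < ↑(n + 1) := by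
    rw [degree_X_pow]; exact_mod_cast k.2
  have hshift (k : Fin n) :
      companion (n + 1) p (EuclideanSpace.basisFun _ 𝕜 k.castSucc) =
        EuclideanSpace.basisFun _ 𝕜 k.succ := by
    rw [← coeffVec_X_pow, companion_coeffVec p (hlt _), ← pow_succ',
      X_pow_modByMonic_of_lt hp (by rw [hdeg]; simp), ← coeffVec_X_pow, Fin.val_succ,
      Fin.val_castSucc]
  have hlast : companion (n + 1) p (EuclideanSpace.basisFun _ 𝕜 (Fin.last n)) =
      coeffVec (n + 1) (X ^ p.natDegree - p) := by
    rw [← coeffVec_X_pow, companion_coeffVec p (hlt _), ← pow_succ', Fin.val_last, ← hdeg,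
      X_pow_natDegree_modByMonic hp]
  rw [Fin.sum_univ_castSucc, hlast, norm_coeffVec_sq]
  simp only [hshift, OrthonormalBasis.norm_eq_one, one_pow, sum_const, card_univ,
    Fintype.card_fin, nsmul_one]
  congr 1
  refine sum_congr rfl fun i hi => ?_
  rw [coeff_sub, coeff_X_pow, if_neg (by rw [hdeg]; exact (mem_range.mp hi).ne), zero_sub,
    norm_neg]

lemma companion_coeffVec_ofRoots (f : ℕ → 𝕜) {d : ℕ} (hd : d < n) :
    companion n (Sequence.ofRoots f n) (coeffVec n (Sequence.ofRoots f d)) -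
        f d • coeffVec n (Sequence.ofRoots f d) =
      coeffVec n (Sequence.ofRoots f (d + 1) %ₘ Sequence.ofRoots f n) := by
  set S := Sequence.ofRoots f
  have hCS : (C (f d) * S d) %ₘ S n = C (f d) * S d := by
    rw [← smul_eq_C_mul, smul_modByMonic, Sequence.ofRoots_modByMonic_of_lt f hd]
  rw [companion_coeffVec _ (by rw [S.degree_eq]; exact_mod_cast hd), Sequence.X_mul_ofRoots,
    add_modByMonic, hCS, map_add, ← smul_eq_C_mul, map_smul, add_sub_cancel_right]

lemma sum_norm_sq_le_sum_norm_companion_basisFun_sq (f : ℕ → 𝕜) :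
    ∑ i ∈ range n, ‖f i‖ ^ 2 ≤
      ∑ k, ‖companion n (Sequence.ofRoots f n) (EuclideanSpace.basisFun _ 𝕜 k)‖ ^ 2 := by
  set S := Sequence.ofRoots f
  -- `X` raises degrees, so the flag `d ↦ S d` is triangular for the reversed order on `Fin n`.
  let v (d : (Fin n)ᵒᵈ) : EuclideanSpace 𝕜 (Fin n) := coeffVec n (S (OrderDual.ofDual d).val)
  have hv : LinearIndependent 𝕜 v := by
    refine LinearIndependent.of_comp (ofCoeffVec n) ?_
    have : ofCoeffVec n ∘ v = S ∘ (Fin.val ∘ OrderDual.ofDual) := _root_.funext fun d =>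
      ofCoeffVec_coeffVec <| by rw [S.degree_eq]; exact_mod_cast (OrderDual.ofDual d).2
    rw [this]
    exact S.linearIndependent.comp _ (Fin.val_injective.comp OrderDual.ofDual.injective)
  have hT (d : (Fin n)ᵒᵈ) : companion n (S n) (v d) - f (OrderDual.ofDual d).val • v d ∈
      span 𝕜 (v '' Set.Iio d) := by
    have hd := (OrderDual.ofDual d).2
    rw [companion_coeffVec_ofRoots f hd]
    rcases (Nat.add_one_le_iff.mpr hd).lt_or_eq with hsucc | hsucc
    · rw [Sequence.ofRoots_modByMonic_of_lt f hsucc]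
      exact subset_span ⟨OrderDual.toDual ⟨_, hsucc⟩, Nat.lt_succ_self _, rfl⟩
    · rw [hsucc, modByMonic_self (Sequence.ofRoots_monic f n), map_zero]
      exact zero_mem _
  calc ∑ i ∈ range n, ‖f i‖ ^ 2 = ∑ d : (Fin n)ᵒᵈ, ‖f (OrderDual.ofDual d).val‖ ^ 2 :=
        (Fin.sum_univ_eq_sum_range (fun i => ‖f i‖ ^ 2) n).symm
    _ ≤ _ := (companion n (S n)).sum_norm_sq_le_of_triangular hv (by simp) hT _

end Polynomial

theorem stmt17_general (n : ℕ) (p : Polynomial ℂ) (hmonic : p.Monic)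
    (hdeg : p.natDegree = n) :
    ((p.roots.map fun z => ‖z‖).sum) ≤
      Real.sqrt (n * ((n - 1 : ℝ) + ∑ i ∈ Finset.range n, ‖p.coeff i‖ ^ 2)) := by
  obtain ⟨f, hroots, hp⟩ := hmonic.exists_eq_ofRoots (IsAlgClosed.splits p)
  rw [hdeg] at hroots hp
  rw [hroots, Multiset.map_map]
  change ∑ i ∈ range n, ‖f i‖ ≤ _
  obtain _ | m := n
  · simp
  have hschur : ∑ i ∈ range (m + 1), ‖f i‖ ^ 2 ≤ m + ∑ i ∈ range (m + 1), ‖p.coeff i‖ ^ 2 := by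
    rw [← sum_norm_companion_basisFun_sq hmonic hdeg, hp]
    exact sum_norm_sq_le_sum_norm_companion_basisFun_sq f
  apply Real.le_sqrt_of_sq_le
  calc (∑ i ∈ range (m + 1), ‖f i‖) ^ 2 ≤ (m + 1 : ℕ) * ∑ i ∈ range (m + 1), ‖f i‖ ^ 2 := by
        simpa using sq_sum_le_card_mul_sum_sq (s := range (m + 1)) (f := fun i => ‖f i‖)
    _ ≤ _ := by
      push_cast
      gcongr
      linarith

theorem stmt17 (n : ℕ) (hn : 2 ≤ n) (p : Polynomial ℂ) (hmonic : p.Monic)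
    (hdeg : p.natDegree = n) :
    ((p.roots.map fun z => ‖z‖).sum) ≤
      Real.sqrt (n * ((n - 1 : ℝ) + ∑ i ∈ Finset.range n, ‖p.coeff i‖ ^ 2)) :=
  stmt17_general n p hmonic hdeg
end

section
/- Let p(z) = zⁿ + aₙ z^(n−1) + … + a₂ z + a₁ be a monic complex polynomial of degree n ≥ 2 and let λ be a zero of p of smallest absolute value. Then |λ| ≤ (1/n)·√(n·(n − 1 + Σᵢ |aᵢ|²)). -/
open Polynomial

/-!
The product of the roots is `±a₁`, so a root `λ` of least modulus satisfies `|λ|ⁿ ≤ |a₁|`.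
Bernoulli's inequality applied to `x = |λ|²` gives `n·x ≤ (n - 1) + xⁿ ≤ (n - 1) + |a₁|²`,
and `|a₁|²` is one term of `Σ |aᵢ|²`.
-/

theorem Polynomial.Splits.norm_pow_natDegree_le_norm_coeff_zero {K : Type*} [NormedField K]
    {p : K[X]} (hsplit : p.Splits) (hmonic : p.Monic) {lam : K}
    (hmin : ∀ μ : K, p.IsRoot μ → ‖lam‖ ≤ ‖μ‖) :
    ‖lam‖ ^ p.natDegree ≤ ‖p.coeff 0‖ := by
  suffices ‖lam‖₊ ^ p.natDegree ≤ ‖p.coeff 0‖₊ by exact_mod_cast this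
  rw [hsplit.coeff_zero_eq_prod_roots_of_monic hmonic, nnnorm_mul, nnnorm_pow, nnnorm_neg,
    nnnorm_one, one_pow, one_mul, show ‖p.roots.prod‖₊ = (p.roots.map (‖·‖₊)).prod from
      map_multiset_prod nnnormHom _, hsplit.natDegree_eq_card_roots, ← Multiset.card_map (‖·‖₊)]
  refine Multiset.pow_card_le_prod fun x hx => ?_
  obtain ⟨μ, hμ, rfl⟩ := Multiset.mem_map.1 hx
  exact hmin μ (isRoot_of_mem_roots hμ)

theorem nat_mul_le_sub_one_add_pow {x : ℝ} (hx : -1 ≤ x) (n : ℕ) :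
    n * x ≤ (n - 1) + x ^ n := by
  have := one_add_mul_le_pow (a := x - 1) (by linarith) n
  rw [add_sub_cancel] at this
  linarith

theorem stmt18_general (n : ℕ) (hn : 2 ≤ n) (p : Polynomial ℂ) (hmonic : p.Monic)
    (hdeg : p.natDegree = n) (lam : ℂ)
    (hmin : ∀ μ : ℂ, p.IsRoot μ → ‖lam‖ ≤ ‖μ‖) :
    ‖lam‖ ≤
      (1 / n) * Real.sqrt (n * ((n - 1 : ℝ) + ∑ i ∈ Finset.range n, ‖p.coeff i‖ ^ 2)) := by
  have hconst : ‖lam‖ ^ n ≤ ‖p.coeff 0‖ :=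
    hdeg ▸ (IsAlgClosed.splits p).norm_pow_natDegree_le_norm_coeff_zero hmonic hmin
  have hcoeff : ‖p.coeff 0‖ ^ 2 ≤ ∑ i ∈ Finset.range n, ‖p.coeff i‖ ^ 2 :=
    Finset.single_le_sum (f := fun i => ‖p.coeff i‖ ^ 2) (fun _ _ => sq_nonneg _)
      (Finset.mem_range.2 (by omega))
  have hbound : n * ‖lam‖ ^ 2 ≤ (n - 1 : ℝ) + ∑ i ∈ Finset.range n, ‖p.coeff i‖ ^ 2 :=
    calc n * ‖lam‖ ^ 2 ≤ (n - 1 : ℝ) + (‖lam‖ ^ 2) ^ n :=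
          nat_mul_le_sub_one_add_pow (by linarith [sq_nonneg ‖lam‖]) n
      _ = (n - 1 : ℝ) + (‖lam‖ ^ n) ^ 2 := by ring
      _ ≤ (n - 1 : ℝ) + ‖p.coeff 0‖ ^ 2 := by gcongr
      _ ≤ _ := by gcongr
  have hn0 : (0 : ℝ) < n := by positivity
  rw [one_div, ← div_eq_inv_mul, le_div_iff₀ hn0, mul_comm]
  refine Real.le_sqrt_of_sq_le ?_
  calc (n * ‖lam‖) ^ 2 = n * (n * ‖lam‖ ^ 2) := by ring
    _ ≤ _ := by gcongr

theorem stmt18 (n : ℕ) (hn : 2 ≤ n) (p : Polynomial ℂ) (hmonic : p.Monic)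
    (hdeg : p.natDegree = n) (lam : ℂ) (hroot : p.IsRoot lam)
    (hmin : ∀ μ : ℂ, p.IsRoot μ → ‖lam‖ ≤ ‖μ‖) :
    ‖lam‖ ≤
      (1 / n) * Real.sqrt (n * ((n - 1 : ℝ) + ∑ i ∈ Finset.range n, ‖p.coeff i‖ ^ 2)) :=
  stmt18_general n hn p hmonic hdeg lam hmin
end
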